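/- arXiv:2509.04271 — 6 statements merged into one kernel-verified Lean document; each statement's English description precedes it below -/
import Mathlib

section
/- Let G be a group and let A, B ⊆ G be nonempty finite sets. If VC^ℓ_B(A) ≤ d and ε ∈ (0,1), then cov(B : St^ℓ_ε(A)) ≤ (30|BA| / (ε|A|))^d; that is, there exists E ⊆ B with |E| ≤ (30|BA|/(ε|A|))^d such that B ⊆ E · St^ℓ_ε(A). -/
open scoped Pointwise symmDiff

/-- `Stab^ℓ_N(A) = {x : |xA △ A| ≤ N}`. -/
def stabL {G : Type*} [Group G] (A : Set G) (N : ℝ) : Set G :=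
  {x : G | (((x • A) ∆ A).ncard : ℝ) ≤ N}

/-- `Stab^r_N(A) = {x : |Ax △ A| ≤ N}`. -/
def stabR {G : Type*} [Group G] (A : Set G) (N : ℝ) : Set G :=
  {x : G | (((A * {x}) ∆ A).ncard : ℝ) ≤ N}

/-- `St^ℓ_ε(A) = Stab^ℓ_{ε|A|}(A)`. -/
def stL {G : Type*} [Group G] (A : Set G) (ε : ℝ) : Set G := stabL A (ε * A.ncard)

/-- `St^r_ε(A) = Stab^r_{ε|A|}(A)`. -/
def stR {G : Type*} [Group G] (A : Set G) (ε : ℝ) : Set G := stabR A (ε * A.ncard)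

/-- A family of sets shatters `S` if every subset of `S` is cut out by a member of the family. -/
def Shatters {α : Type*} (F : Set (Set α)) (S : Set α) : Prop :=
  ∀ T ⊆ S, ∃ f ∈ F, S ∩ f = T

/-- VC-dimension of a set system: the supremum of cardinalities of finite shattered sets. -/
noncomputable def vcDim {α : Type*} (F : Set (Set α)) : ℕ∞ :=
  ⨆ (S : Finset α) (_ : Shatters F ↑S), (S.card : ℕ∞)

/-- The family of left translates `{xA : x ∈ B}`. -/
def leftFam {G : Type*} [Group G] (A B : Set G) : Set (Set G) := (fun x => x • A) '' B

/-- The family of right translates `{Ax : x ∈ B}`. -/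
def rightFam {G : Type*} [Group G] (A B : Set G) : Set (Set G) := (fun x => A * {x}) '' B

/-- `Z^ℓ_ε(A,X) = {g : min(|gX ∩ A|, |gX \ A|) ≥ ε|X|}`. -/
def Zl {G : Type*} [Group G] (A X : Set G) (ε : ℝ) : Set G :=
  {g : G | ε * X.ncard ≤ min (((g • X) ∩ A).ncard : ℝ) (((g • X) \ A).ncard : ℝ)}

/-!
Choose `E ⊆ B` maximal such that the translates `e • A`, `e ∈ E`, are pairwise more than
`D = ε * #A` apart in symmetric-difference distance; maximality gives `B ⊆ E * St^ℓ_ε(A)`. The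
translates form a `D`-separated family of subsets of `Ω = B * A` of VC-dimension at most `d`, and
the bound on `#E` is Haussler's packing lemma for such a family. Count the pairs `(S, x)` with
`#S = k` and `x ∈ Ω \ S` in which `x` splits members with a common trace on `S`: separation forces
about `D / 2` splitting points per surplus member of each trace class, while Haussler's bound
(a one-inclusion graph has at most `d` times as many edges as vertices), applied with weights to the
traces on `S ∪ {x}`, limits the total. For `k ≈ 4 d #Ω / D` the family therefore has at most twice
as many members as traces on a `k`-set, hence, by Sauer–Shelah, at most
`2 (e k / d) ^ d ≤ (30 #Ω / D) ^ d`.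
-/

namespace Finset

variable {α : Type*} [DecidableEq α] {𝒜 ℬ 𝒞 𝒦 : Finset (Finset α)} {s S T U Ω : Finset α}
  {a x : α} {D : ℝ}

/-! ### One-inclusion graphs -/

/-- The edges of the one-inclusion graph of `𝒜` in direction `a`, each represented by its
endpoint not containing `a`. -/
def oneInclusionEdges (𝒜 : Finset (Finset α)) (a : α) : Finset (Finset α) :=
  𝒜.nonMemberSubfamily a ∩ 𝒜.memberSubfamily a

@[simp] lemma mem_oneInclusionEdges :
    s ∈ 𝒜.oneInclusionEdges a ↔ s ∈ 𝒜 ∧ insert a s ∈ 𝒜 ∧ a ∉ s := by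
  simp only [oneInclusionEdges, mem_inter, mem_nonMemberSubfamily, mem_memberSubfamily]
  tauto

lemma oneInclusionEdges_filter (p : Finset α → Prop) [DecidablePred p] :
    (𝒜.filter p).oneInclusionEdges a =
      (𝒜.oneInclusionEdges a).filter fun s => p s ∧ p (insert a s) := by
  ext s
  simp only [mem_oneInclusionEdges, mem_filter]
  tauto

lemma card_oneInclusionEdges_add_card_le (a : α) (𝒜 ℬ : Finset (Finset α)) :
    #(𝒜.oneInclusionEdges a) + #(ℬ.oneInclusionEdges a) ≤
      #((𝒜 ∪ ℬ).oneInclusionEdges a) + #((𝒜 ∩ ℬ).oneInclusionEdges a) := by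
  rw [← card_union_add_card_inter]
  gcongr
  · intro s
    simp only [mem_union, mem_oneInclusionEdges]
    tauto
  · intro s
    simp only [mem_inter, mem_oneInclusionEdges]
    tauto

lemma card_oneInclusionEdges_eq_add (h : a ≠ x) (𝒜 : Finset (Finset α)) :
    #(𝒜.oneInclusionEdges x) =
      #((𝒜.nonMemberSubfamily a).oneInclusionEdges x) +
        #((𝒜.memberSubfamily a).oneInclusionEdges x) := by
  rw [← card_memberSubfamily_add_card_nonMemberSubfamily a, add_comm]
  congr 2 <;> ext s <;> simp [insert_comm, h, h.symm] <;> tauto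

lemma Shatters.of_image_erase (hs : (𝒜.image (erase · a)).Shatters s) : 𝒜.Shatters s := by
  obtain ⟨_, hu, hsu⟩ := hs.exists_superset
  obtain ⟨u, -, rfl⟩ := mem_image.1 hu
  have ha : a ∉ s := fun ha => notMem_erase a u (hsu ha)
  intro t ht
  obtain ⟨_, hv', rfl⟩ := hs ht
  obtain ⟨v, hv, rfl⟩ := mem_image.1 hv'
  exact ⟨v, hv, by rw [inter_erase, erase_eq_of_notMem fun h => ha (mem_of_mem_inter_left h)]⟩

lemma Shatters.of_image_inter (hs : (𝒞.image (· ∩ T)).Shatters s) : 𝒞.Shatters s := by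
  obtain ⟨_, hu, hsu⟩ := hs.exists_superset
  obtain ⟨u, -, rfl⟩ := mem_image.1 hu
  have hsT : s ⊆ T := hsu.trans inter_subset_right
  intro t ht
  obtain ⟨_, hv', rfl⟩ := hs ht
  obtain ⟨v, hv, rfl⟩ := mem_image.1 hv'
  exact ⟨v, hv, by rw [← inter_assoc, inter_eq_left.2 (inter_subset_left.trans hsT)]⟩

lemma Shatters.insert_of_oneInclusionEdges (hs : (𝒜.oneInclusionEdges a).Shatters s) :
    𝒜.Shatters (insert a s) := by
  obtain ⟨u, hu, hsu⟩ := hs.exists_superset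
  have ha : a ∉ s := fun ha => (mem_oneInclusionEdges.1 hu).2.2 (hsu ha)
  intro t ht
  rw [subset_insert_iff] at ht
  obtain ⟨v, hv, hsv⟩ := hs ht
  rw [mem_oneInclusionEdges] at hv
  by_cases hat : a ∈ t
  · refine ⟨insert a v, hv.2.1, ?_⟩
    rw [← insert_inter_distrib, hsv, insert_erase hat]
  · refine ⟨v, hv.1, ?_⟩
    rwa [insert_inter_of_notMem hv.2.2, hsv, erase_eq_self]

lemma vcDim_le_of_shatters (h : ∀ s, 𝒜.Shatters s → ℬ.Shatters s) : 𝒜.vcDim ≤ ℬ.vcDim :=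
  Finset.sup_le fun s hs => (h s (mem_shatterer.1 hs)).card_le_vcDim

lemma vcDim_image_inter_le (T : Finset α) (𝒞 : Finset (Finset α)) :
    (𝒞.image (· ∩ T)).vcDim ≤ 𝒞.vcDim :=
  vcDim_le_of_shatters fun _ hs => hs.of_image_inter

lemma vcDim_nonMemberSubfamily_union_memberSubfamily_le (a : α) (𝒜 : Finset (Finset α)) :
    (𝒜.nonMemberSubfamily a ∪ 𝒜.memberSubfamily a).vcDim ≤ 𝒜.vcDim := by
  rw [union_comm, memberSubfamily_union_nonMemberSubfamily]
  exact vcDim_le_of_shatters fun s hs => hs.of_image_erase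

lemma vcDim_oneInclusionEdges_lt (h : (𝒜.oneInclusionEdges a).Nonempty) :
    (𝒜.oneInclusionEdges a).vcDim < 𝒜.vcDim := by
  obtain ⟨s, hs, hsup⟩ := exists_mem_eq_sup _ ⟨∅, mem_shatterer.2 (shatters_empty.2 h)⟩ card
  have hs := mem_shatterer.1 hs
  obtain ⟨u, hu, hsu⟩ := hs.exists_superset
  have ha : a ∉ s := fun ha => (mem_oneInclusionEdges.1 hu).2.2 (hsu ha)
  calc (𝒜.oneInclusionEdges a).vcDim = #s := hsup
    _ < #(insert a s) := by rw [card_insert_of_notMem ha]; omega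
    _ ≤ 𝒜.vcDim := hs.insert_of_oneInclusionEdges.card_le_vcDim

theorem sum_card_oneInclusionEdges_le (T : Finset α) (𝒜 : Finset (Finset α)) :
    ∑ x ∈ T, #(𝒜.oneInclusionEdges x) ≤ 𝒜.vcDim * #𝒜 := by
  induction T using Finset.cons_induction generalizing 𝒜 with
  | empty => simp
  | cons a T haT ih =>
    -- With `𝒜₀ = 𝒜.nonMemberSubfamily a` and `𝒜₁ = 𝒜.memberSubfamily a`, the `a`-edges form
    -- `ℰ = 𝒜₀ ∩ 𝒜₁`, of smaller VC-dimension, and the other edges of `𝒜` are those of `𝒜₀` and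
    -- `𝒜₁`, which are counted in `𝒰 = 𝒜₀ ∪ 𝒜₁` and `ℰ`.
    set 𝒰 := 𝒜.nonMemberSubfamily a ∪ 𝒜.memberSubfamily a
    set ℰ := 𝒜.oneInclusionEdges a
    have hsplit : ∑ x ∈ T, #(𝒜.oneInclusionEdges x) ≤
        ∑ x ∈ T, #(𝒰.oneInclusionEdges x) + ∑ x ∈ T, #(ℰ.oneInclusionEdges x) := by
      rw [← sum_add_distrib]
      refine sum_le_sum fun x hx => ?_
      rw [card_oneInclusionEdges_eq_add (ne_of_mem_of_not_mem hx haT).symm]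
      exact card_oneInclusionEdges_add_card_le x _ _
    have hcard : #𝒰 + #ℰ = #𝒜 := (card_union_add_card_inter _ _).trans <| by
      rw [add_comm, card_memberSubfamily_add_card_nonMemberSubfamily]
    have h𝒰 : 𝒰.vcDim * #𝒰 ≤ 𝒜.vcDim * #𝒰 :=
      Nat.mul_le_mul_right _ (vcDim_nonMemberSubfamily_union_memberSubfamily_le a 𝒜)
    have hℰ : #ℰ + ℰ.vcDim * #ℰ ≤ 𝒜.vcDim * #ℰ := by
      rcases ℰ.eq_empty_or_nonempty with h | h
      · simp [h]
      · calc #ℰ + ℰ.vcDim * #ℰ = (ℰ.vcDim + 1) * #ℰ := by ring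
          _ ≤ 𝒜.vcDim * #ℰ := Nat.mul_le_mul_right _ (vcDim_oneInclusionEdges_lt h)
    rw [sum_cons, ← hcard, mul_add]
    linarith [ih 𝒰, ih ℰ]

lemma sum_eq_sum_range_card_filter_lt {ι : Type*} {s : Finset ι} {f : ι → ℕ} {N : ℕ}
    (h : ∀ i ∈ s, f i ≤ N) : ∑ i ∈ s, f i = ∑ k ∈ range N, #{i ∈ s | k < f i} := by
  simp_rw [card_filter]
  rw [sum_comm]
  refine sum_congr rfl fun i hi => ?_
  have hfi := h i hi
  have hrange : {k ∈ range N | k < f i} = range (f i) := by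
    ext k
    simp only [mem_filter, mem_range]
    omega
  rw [sum_boole, Nat.cast_id, hrange, card_range]

/-- Layer-cake decomposition of the weights: the unweighted bound applies to each of the families
`{s ∈ 𝒜 | k < w s}`. -/
theorem sum_sum_oneInclusionEdges_min_le (T : Finset α) (𝒜 : Finset (Finset α))
    (w : Finset α → ℕ) :
    ∑ x ∈ T, ∑ s ∈ 𝒜.oneInclusionEdges x, min (w s) (w (insert x s)) ≤
      𝒜.vcDim * ∑ s ∈ 𝒜, w s := by
  set N := ∑ s ∈ 𝒜, w s
  have hw : ∀ s ∈ 𝒜, w s ≤ N := fun s hs => single_le_sum (fun _ _ => Nat.zero_le _) hs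
  calc _ = ∑ x ∈ T, ∑ k ∈ range N, #({s ∈ 𝒜 | k < w s}.oneInclusionEdges x) := by
        refine sum_congr rfl fun x _ => ?_
        rw [sum_eq_sum_range_card_filter_lt fun s hs =>
          (min_le_left _ _).trans (hw s (mem_oneInclusionEdges.1 hs).1)]
        simp_rw [oneInclusionEdges_filter, lt_min_iff]
    _ = ∑ k ∈ range N, ∑ x ∈ T, #({s ∈ 𝒜 | k < w s}.oneInclusionEdges x) := sum_comm
    _ ≤ ∑ k ∈ range N, 𝒜.vcDim * #{s ∈ 𝒜 | k < w s} := sum_le_sum fun k _ =>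
        (sum_card_oneInclusionEdges_le T _).trans
          (Nat.mul_le_mul_right _ (vcDim_mono (filter_subset _ _)))
    _ = 𝒜.vcDim * N := by rw [← mul_sum, ← sum_eq_sum_range_card_filter_lt hw]

lemma card_le_sum_choose_vcDim (h : ∀ A ∈ 𝒜, A ⊆ T) :
    #𝒜 ≤ ∑ k ∈ Iic 𝒜.vcDim, (#T).choose k := by
  simp_rw [← card_powersetCard]
  refine (card_le_card_shatterer 𝒜).trans <|
    (card_le_card fun s hs => mem_biUnion.2 ⟨#s, ?_⟩).trans card_biUnion_le
  obtain ⟨u, hu, hsu⟩ := (mem_shatterer.1 hs).exists_superset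
  exact ⟨mem_Iic.2 (mem_shatterer.1 hs).card_le_vcDim,
    mem_powersetCard.2 ⟨hsu.trans (h u hu), rfl⟩⟩

lemma card_image_inter_le_sum_choose {d : ℕ} (hd : 𝒞.vcDim ≤ d) (S : Finset α) :
    #(𝒞.image (· ∩ S)) ≤ ∑ i ∈ Iic d, (#S).choose i := by
  refine (card_le_sum_choose_vcDim fun _ hu => ?_).trans
    (sum_le_sum_of_subset (Iic_subset_Iic.2 ((vcDim_image_inter_le S 𝒞).trans hd)))
  obtain ⟨C, -, rfl⟩ := mem_image.1 hu
  exact inter_subset_right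

def traceEdgeWeight (𝒞 : Finset (Finset α)) (T : Finset α) (x : α) : ℕ :=
  ∑ u ∈ (𝒞.image (· ∩ T)).oneInclusionEdges x,
    min #{C ∈ 𝒞 | C ∩ T = u} #{C ∈ 𝒞 | C ∩ T = insert x u}

theorem sum_traceEdgeWeight_le (𝒞 : Finset (Finset α)) (T : Finset α) :
    ∑ x ∈ T, traceEdgeWeight 𝒞 T x ≤ 𝒞.vcDim * #𝒞 := by
  refine (sum_sum_oneInclusionEdges_min_le T _ _).trans ?_
  rw [← card_eq_sum_card_image]
  exact Nat.mul_le_mul_right _ (vcDim_image_inter_le T 𝒞)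

lemma inter_insert_eq_iff (hx : x ∉ S) {u : Finset α} (hu : u ⊆ S) (C : Finset α) :
    (C ∩ insert x S = u ↔ C ∩ S = u ∧ x ∉ C) ∧
      (C ∩ insert x S = insert x u ↔ C ∩ S = u ∧ x ∈ C) := by
  have hxu : x ∉ u := fun h => hx (hu h)
  have hxCS : x ∉ C ∩ S := fun h => hx (mem_of_mem_inter_right h)
  by_cases hxC : x ∈ C
  · rw [inter_insert_of_mem hxC]
    refine ⟨⟨fun h => absurd (h ▸ mem_insert_self x _) hxu, fun h => absurd hxC h.2⟩, ?_⟩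
    exact ⟨fun h => ⟨by rw [← erase_insert hxCS, h, erase_insert hxu], hxC⟩, fun h => h.1 ▸ rfl⟩
  · rw [inter_insert_of_notMem hxC]
    refine ⟨⟨fun h => ⟨h, hxC⟩, fun h => h.1⟩, ?_⟩
    exact ⟨fun h => absurd (h ▸ mem_insert_self x u) hxCS, fun h => absurd h.2 hxC⟩

lemma sum_min_card_filter_le_traceEdgeWeight (hx : x ∉ S) :
    ∑ u ∈ 𝒞.image (· ∩ S), min #{C ∈ 𝒞 | C ∩ S = u ∧ x ∉ C} #{C ∈ 𝒞 | C ∩ S = u ∧ x ∈ C} ≤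
      traceEdgeWeight 𝒞 (insert x S) x := by
  have hS : ∀ u ∈ 𝒞.image (· ∩ S), u ⊆ S := by
    simp only [mem_image]
    rintro _ ⟨C, -, rfl⟩
    exact inter_subset_right
  rw [traceEdgeWeight]
  calc _ = ∑ u ∈ 𝒞.image (· ∩ S), min #{C ∈ 𝒞 | C ∩ insert x S = u}
        #{C ∈ 𝒞 | C ∩ insert x S = insert x u} := by
        refine sum_congr rfl fun u hu => ?_
        simp only [inter_insert_eq_iff hx (hS u hu)]
    _ ≤ _ := by
        refine sum_le_sum_of_ne_zero fun u hu hne => ?_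
        obtain ⟨h₀, h₁⟩ : (0 < #{C ∈ 𝒞 | C ∩ insert x S = u}) ∧
            0 < #{C ∈ 𝒞 | C ∩ insert x S = insert x u} := by
          simpa [Nat.pos_iff_ne_zero, not_or] using hne
        obtain ⟨C₀, hC₀⟩ := card_pos.1 h₀
        obtain ⟨C₁, hC₁⟩ := card_pos.1 h₁
        rw [mem_filter] at hC₀ hC₁
        exact mem_oneInclusionEdges.2 ⟨mem_image.2 ⟨C₀, hC₀⟩, mem_image.2 ⟨C₁, hC₁⟩,
          fun h => hx (hS u hu h)⟩

/-! ### Haussler's packing lemma -/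

lemma mul_le_add_mul_min (a b : ℕ) : a * b ≤ (a + b) * min a b := by
  rcases le_total a b with h | h
  · rw [min_eq_left h]; nlinarith
  · rw [min_eq_right h]; nlinarith

lemma sum_sum_card_symmDiff_le (hU : ∀ A ∈ 𝒦, ∀ B ∈ 𝒦, A ∆ B ⊆ U) :
    ∑ A ∈ 𝒦, ∑ B ∈ 𝒦, #(A ∆ B) ≤
      2 * #𝒦 * ∑ x ∈ U, min #{A ∈ 𝒦 | x ∉ A} #{A ∈ 𝒦 | x ∈ A} := by
  have hcount (x : α) : ∑ A ∈ 𝒦, #{B ∈ 𝒦 | x ∈ A ∆ B} =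
      2 * (#{A ∈ 𝒦 | x ∉ A} * #{A ∈ 𝒦 | x ∈ A}) := by
    have hA (A : Finset α) : #{B ∈ 𝒦 | x ∈ A ∆ B} =
        if x ∈ A then #{B ∈ 𝒦 | x ∉ B} else #{B ∈ 𝒦 | x ∈ B} := by
      split_ifs with h <;> simp [mem_symmDiff, h]
    rw [sum_congr rfl fun A _ => hA A, sum_ite, sum_const, sum_const, smul_eq_mul, smul_eq_mul]
    ring
  calc ∑ A ∈ 𝒦, ∑ B ∈ 𝒦, #(A ∆ B)
        = ∑ A ∈ 𝒦, ∑ B ∈ 𝒦, ∑ x ∈ U, if x ∈ A ∆ B then 1 else 0 :=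
        sum_congr rfl fun A hA => sum_congr rfl fun B hB => by
          rw [sum_boole, Nat.cast_id, filter_mem_eq_inter, inter_eq_right.2 (hU A hA B hB)]
    _ = ∑ A ∈ 𝒦, ∑ x ∈ U, ∑ B ∈ 𝒦, if x ∈ A ∆ B then 1 else 0 :=
        sum_congr rfl fun _ _ => sum_comm
    _ = ∑ x ∈ U, ∑ A ∈ 𝒦, #{B ∈ 𝒦 | x ∈ A ∆ B} := by
        rw [sum_comm]
        simp only [card_filter]
    _ ≤ ∑ x ∈ U, 2 * #𝒦 * min #{A ∈ 𝒦 | x ∉ A} #{A ∈ 𝒦 | x ∈ A} := by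
        refine sum_le_sum fun x _ => ?_
        rw [hcount, mul_assoc, ← card_filter_add_card_filter_not (fun A => x ∉ A) (s := 𝒦)]
        simp_rw [not_not]
        exact Nat.mul_le_mul_left 2 (mul_le_add_mul_min _ _)
    _ = _ := by rw [mul_sum]

lemma mul_card_sub_one_le_two_mul_sum_min (hne : 𝒦.Nonempty)
    (hsep : (𝒦 : Set (Finset α)).Pairwise fun A B => D ≤ #(A ∆ B))
    (hU : ∀ A ∈ 𝒦, ∀ B ∈ 𝒦, A ∆ B ⊆ U) :
    D * (#𝒦 - 1) ≤ 2 * ∑ x ∈ U, ((min #{A ∈ 𝒦 | x ∉ A} #{A ∈ 𝒦 | x ∈ A} : ℕ) : ℝ) := by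
  have hrow (A) (hA : A ∈ 𝒦) : D * (#𝒦 - 1) ≤ ∑ B ∈ 𝒦, (#(A ∆ B) : ℝ) := by
    calc D * (#𝒦 - 1) = ∑ B ∈ 𝒦.erase A, D := by
          rw [sum_const, card_erase_of_mem hA, nsmul_eq_mul, Nat.cast_pred (card_pos.2 hne)]
          ring
      _ ≤ ∑ B ∈ 𝒦.erase A, (#(A ∆ B) : ℝ) :=
          sum_le_sum fun B hB => hsep hA (mem_of_mem_erase hB) (ne_of_mem_erase hB).symm
      _ ≤ ∑ B ∈ 𝒦, (#(A ∆ B) : ℝ) :=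
          sum_le_sum_of_subset_of_nonneg (erase_subset A 𝒦) fun _ _ _ => Nat.cast_nonneg _
  have hk : (0 : ℝ) < #𝒦 := Nat.cast_pos.2 (card_pos.2 hne)
  refine le_of_mul_le_mul_left ?_ hk
  calc (#𝒦 : ℝ) * (D * (#𝒦 - 1)) = ∑ _A ∈ 𝒦, D * (#𝒦 - 1) := by
        rw [sum_const, nsmul_eq_mul]
    _ ≤ ∑ A ∈ 𝒦, ∑ B ∈ 𝒦, (#(A ∆ B) : ℝ) := sum_le_sum hrow
    _ ≤ _ := by exact_mod_cast (sum_sum_card_symmDiff_le hU).trans_eq (by ring)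

lemma symmDiff_subset_sdiff_of_inter_eq {A B : Finset α} (hA : A ⊆ Ω) (hB : B ⊆ Ω)
    (h : A ∩ S = B ∩ S) : A ∆ B ⊆ Ω \ S := by
  intro x hx
  have hx' := mem_symmDiff.1 hx
  refine mem_sdiff.2 ⟨hx'.elim (fun h => hA h.1) (fun h => hB h.1), fun hxS => ?_⟩
  have := congrArg (x ∈ ·) h
  simp only [mem_inter, hxS, and_true, eq_iff_iff] at this
  tauto

lemma mul_card_sub_card_image_inter_le (hΩ : ∀ C ∈ 𝒞, C ⊆ Ω)
    (hsep : (𝒞 : Set (Finset α)).Pairwise fun A B => D ≤ #(A ∆ B)) (S : Finset α) :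
    D * (#𝒞 - #(𝒞.image (· ∩ S))) ≤
      2 * ∑ x ∈ Ω \ S, (traceEdgeWeight 𝒞 (insert x S) x : ℝ) := by
  calc D * (#𝒞 - #(𝒞.image (· ∩ S)))
      = ∑ u ∈ 𝒞.image (· ∩ S), D * (#{C ∈ 𝒞 | C ∩ S = u} - 1) := by
        rw [← mul_sum, sum_sub_distrib, card_eq_sum_card_image (· ∩ S) 𝒞]
        simp
    _ ≤ ∑ u ∈ 𝒞.image (· ∩ S), 2 * ∑ x ∈ Ω \ S,
          ((min #{C ∈ 𝒞 | C ∩ S = u ∧ x ∉ C} #{C ∈ 𝒞 | C ∩ S = u ∧ x ∈ C} : ℕ) : ℝ) := by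
        refine sum_le_sum fun u hu => ?_
        obtain ⟨C, hC, hCu⟩ := mem_image.1 hu
        simp_rw [← filter_filter]
        refine mul_card_sub_one_le_two_mul_sum_min ⟨C, mem_filter.2 ⟨hC, hCu⟩⟩
          (hsep.mono (coe_subset.2 (filter_subset _ _))) fun A hA B hB => ?_
        rw [mem_filter] at hA hB
        exact symmDiff_subset_sdiff_of_inter_eq (hΩ A hA.1) (hΩ B hB.1) (hA.2.trans hB.2.symm)
    _ = 2 * ∑ x ∈ Ω \ S, ∑ u ∈ 𝒞.image (· ∩ S),
          ((min #{C ∈ 𝒞 | C ∩ S = u ∧ x ∉ C} #{C ∈ 𝒞 | C ∩ S = u ∧ x ∈ C} : ℕ) : ℝ) := by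
        rw [← mul_sum, sum_comm]
    _ ≤ _ := by
        refine mul_le_mul_of_nonneg_left (sum_le_sum fun x hx => ?_) zero_le_two
        exact_mod_cast sum_min_card_filter_le_traceEdgeWeight (mem_sdiff.1 hx).2

lemma sum_powersetCard_sum_sdiff {M : Type*} [AddCommMonoid M] (f : Finset α → α → M)
    (k : ℕ) (Ω : Finset α) :
    ∑ S ∈ powersetCard k Ω, ∑ x ∈ Ω \ S, f (insert x S) x =
      ∑ T ∈ powersetCard (k + 1) Ω, ∑ x ∈ T, f T x := by
  rw [sum_sigma', sum_sigma']
  refine sum_nbij' (fun p => ⟨insert p.2 p.1, p.2⟩) (fun p => ⟨p.1.erase p.2, p.2⟩)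
    ?_ ?_ ?_ ?_ fun _ _ => rfl
  · rintro ⟨S, x⟩ hp
    simp only [mem_sigma, mem_powersetCard, mem_sdiff] at hp ⊢
    exact ⟨⟨insert_subset hp.2.1 hp.1.1, by rw [card_insert_of_notMem hp.2.2, hp.1.2]⟩,
      mem_insert_self x S⟩
  · rintro ⟨T, x⟩ hp
    simp only [mem_sigma, mem_powersetCard, mem_sdiff] at hp ⊢
    exact ⟨⟨(erase_subset x T).trans hp.1.1, by rw [card_erase_of_mem hp.2, hp.1.2]; rfl⟩,
      hp.1.1 hp.2, notMem_erase x T⟩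
  · rintro ⟨S, x⟩ hp
    simp only [mem_sigma, mem_sdiff] at hp
    simp [erase_insert hp.2.2]
  · rintro ⟨T, x⟩ hp
    simp only [mem_sigma] at hp
    simp [insert_erase hp.2]

/-- Double counting the pairs `(S, x)` with `S ∈ powersetCard k Ω` and `x ∈ Ω \ S`, which are the
pairs `(T, x)` with `T ∈ powersetCard (k + 1) Ω` and `x ∈ T`. -/
theorem choose_mul_card_sub_sum_choose_le {d : ℕ} (hΩ : ∀ C ∈ 𝒞, C ⊆ Ω) (hd : 𝒞.vcDim ≤ d)
    (hsep : (𝒞 : Set (Finset α)).Pairwise fun A B => D ≤ #(A ∆ B)) (hD : 0 ≤ D) (k : ℕ) :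
    (#Ω).choose k * (D * (#𝒞 - ∑ i ∈ Iic d, k.choose i)) ≤
      2 * (#Ω).choose (k + 1) * (d * #𝒞) := by
  calc ((#Ω).choose k : ℝ) * (D * (#𝒞 - ∑ i ∈ Iic d, k.choose i))
      = ∑ S ∈ powersetCard k Ω, D * (#𝒞 - ∑ i ∈ Iic d, k.choose i) := by
        rw [sum_const, card_powersetCard, nsmul_eq_mul]
    _ ≤ ∑ S ∈ powersetCard k Ω, D * (#𝒞 - #(𝒞.image (· ∩ S))) := sum_le_sum fun S hS => by
        gcongr
        simpa [(mem_powersetCard.1 hS).2] using card_image_inter_le_sum_choose hd S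
    _ ≤ ∑ S ∈ powersetCard k Ω, 2 * ∑ x ∈ Ω \ S, (traceEdgeWeight 𝒞 (insert x S) x : ℝ) :=
        sum_le_sum fun S _ => mul_card_sub_card_image_inter_le hΩ hsep S
    _ = 2 * ∑ T ∈ powersetCard (k + 1) Ω, ∑ x ∈ T, (traceEdgeWeight 𝒞 T x : ℝ) := by
        rw [← mul_sum, sum_powersetCard_sum_sdiff (fun T x => (traceEdgeWeight 𝒞 T x : ℝ))]
    _ ≤ 2 * ∑ T ∈ powersetCard (k + 1) Ω, (d * #𝒞 : ℝ) := by
        gcongr with T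
        exact_mod_cast (sum_traceEdgeWeight_le 𝒞 T).trans (Nat.mul_le_mul_right _ hd)
    _ = _ := by rw [sum_const, card_powersetCard, nsmul_eq_mul, mul_assoc]

lemma sum_choose_le_exp_mul_div_pow {d n : ℕ} (h : d ≤ n) :
    ((∑ i ∈ Iic d, n.choose i : ℕ) : ℝ) ≤ (Real.exp 1 * n / d) ^ d := by
  rcases d.eq_zero_or_pos with rfl | hd
  · simp [show Iic 0 = {0} from Iic_bot]
  have hn : (0 : ℝ) < n := Nat.cast_pos.2 (hd.trans_le h)
  set r : ℝ := d / n
  have hr : 0 < r := by positivity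
  have hr1 : r ≤ 1 := div_le_one_of_le₀ (Nat.cast_le.2 h) hn.le
  have hpow : (Real.exp 1 * n / d) ^ d = Real.exp 1 ^ d / r ^ d := by
    rw [← div_pow]
    congr 1
    simp only [r]
    field_simp
  rw [hpow, le_div_iff₀ (pow_pos hr d)]
  push_cast
  calc (∑ i ∈ Iic d, (n.choose i : ℝ)) * r ^ d = ∑ i ∈ Iic d, r ^ d * n.choose i := by
        rw [sum_mul]
        simp_rw [mul_comm]
    _ ≤ ∑ i ∈ Iic d, r ^ i * n.choose i := sum_le_sum fun i hi =>
        mul_le_mul_of_nonneg_right (pow_le_pow_of_le_one hr.le hr1 (mem_Iic.1 hi)) (by positivity)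
    _ ≤ ∑ i ∈ range (n + 1), r ^ i * n.choose i :=
        sum_le_sum_of_subset_of_nonneg (fun i hi => mem_range.2 (by linarith [mem_Iic.1 hi]))
          fun _ _ _ => by positivity
    _ = (r + 1) ^ n := by simp [add_pow]
    _ ≤ Real.exp r ^ n := by gcongr; exact Real.add_one_le_exp r
    _ = Real.exp 1 ^ d := by
        rw [← Real.exp_nat_mul, ← Real.exp_nat_mul]
        congr 1
        simp only [r]
        field_simp

theorem card_le_two_mul_sum_choose {d k : ℕ} (hΩ : ∀ C ∈ 𝒞, C ⊆ Ω) (hd : 𝒞.vcDim ≤ d)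
    (hsep : (𝒞 : Set (Finset α)).Pairwise fun A B => D ≤ #(A ∆ B)) (hD : 0 < D)
    (hk : k ≤ #Ω) (hkD : 4 * d * #Ω ≤ (k + 1) * D) :
    (#𝒞 : ℝ) ≤ 2 * ((∑ i ∈ Iic d, k.choose i : ℕ) : ℝ) := by
  have hchoose : ((#Ω).choose (k + 1) : ℝ) * (k + 1) ≤ (#Ω).choose k * #Ω := by
    exact_mod_cast (Nat.choose_succ_right_eq _ k).trans_le (Nat.mul_le_mul_left _ (Nat.sub_le _ _))
  set c : ℝ := ↑((#Ω).choose k)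
  set Φ : ℝ := ((∑ i ∈ Iic d, k.choose i : ℕ) : ℝ)
  have hc : 0 < c := Nat.cast_pos.2 (Nat.choose_pos hk)
  have h : c * (k + 1) * (D * (#𝒞 - Φ)) ≤ c * (k + 1) * (D * (#𝒞 / 2)) := by
    calc c * (k + 1) * (D * (#𝒞 - Φ)) = (k + 1) * (c * (D * (#𝒞 - Φ))) := by ring
      _ ≤ (k + 1) * (2 * (#Ω).choose (k + 1) * (d * #𝒞)) := mul_le_mul_of_nonneg_left
          (choose_mul_card_sub_sum_choose_le hΩ hd hsep hD.le k) (by positivity)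
      _ = 2 * ((#Ω).choose (k + 1) * (k + 1)) * d * #𝒞 := by ring
      _ ≤ 2 * (c * #Ω) * d * #𝒞 := by gcongr 2 * ?_ * _ * _
      _ = c * (4 * d * #Ω) * #𝒞 / 2 := by ring
      _ ≤ c * ((k + 1) * D) * #𝒞 / 2 := by gcongr
      _ = _ := by ring
  have := le_of_mul_le_mul_left (le_of_mul_le_mul_left h (mul_pos hc (by positivity))) hD
  linarith

theorem card_le_of_eight_mul_lt {d : ℕ} (hΩ : ∀ C ∈ 𝒞, C ⊆ Ω) (hd : 𝒞.vcDim ≤ d)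
    (hsep : (𝒞 : Set (Finset α)).Pairwise fun A B => D ≤ #(A ∆ B)) (hd1 : 1 ≤ d)
    (h8 : 8 * d < D) (hDΩ : D < #Ω) :
    (#𝒞 : ℝ) ≤ (30 * #Ω / D) ^ d := by
  have hD : 0 < D := (by positivity : (0 : ℝ) ≤ 8 * d).trans_lt h8
  -- `k + 1 ≥ q` is what `card_le_two_mul_sum_choose` needs, `k ≤ q` keeps `(e k / d) ^ d` small.
  set q : ℝ := 4 * d * #Ω / D
  set k := ⌊q⌋₊
  have hkq : (k : ℝ) ≤ q := Nat.floor_le (by positivity)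
  have hdk : d ≤ k := Nat.le_floor <| by
    rw [le_div_iff₀ hD]
    nlinarith
  have hkΩ : k ≤ #Ω := by
    have : q < #Ω := by
      rw [div_lt_iff₀ hD]
      nlinarith
    exact_mod_cast hkq.trans this.le
  have hkD : 4 * d * #Ω ≤ (k + 1) * D := by
    have := Nat.lt_floor_add_one q
    rw [div_lt_iff₀ hD] at this
    exact this.le
  have hkd : Real.exp 1 * k / d ≤ 4 * Real.exp 1 * #Ω / D := by
    calc Real.exp 1 * k / d ≤ Real.exp 1 * q / d := by gcongr
      _ = 4 * Real.exp 1 * #Ω / D := by simp only [q]; field_simp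
  calc (#𝒞 : ℝ) ≤ 2 * ((∑ i ∈ Iic d, k.choose i : ℕ) : ℝ) :=
        card_le_two_mul_sum_choose hΩ hd hsep hD hkΩ hkD
    _ ≤ 2 ^ d * (4 * Real.exp 1 * #Ω / D) ^ d :=
        mul_le_mul (le_self_pow₀ one_le_two (by omega))
          ((sum_choose_le_exp_mul_div_pow hdk).trans (pow_le_pow_left₀ (by positivity) hkd d))
          (by positivity) (by positivity)
    _ ≤ (30 * #Ω / D) ^ d := by
        rw [← mul_pow]
        gcongr
        rw [← mul_div_assoc, ← mul_assoc, ← mul_assoc]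
        gcongr
        linarith [Real.exp_one_lt_d9]

theorem card_le_of_pairwise_le_card_symmDiff {d : ℕ} (hΩ : ∀ C ∈ 𝒞, C ⊆ Ω)
    (hd : 𝒞.vcDim ≤ d) (hsep : (𝒞 : Set (Finset α)).Pairwise fun A B => D ≤ #(A ∆ B))
    (hD : 0 < D) (hDΩ : D < #Ω) :
    (#𝒞 : ℝ) ≤ (30 * #Ω / D) ^ d := by
  have h30 : 2 ≤ 30 * #Ω / D := by
    rw [le_div_iff₀ hD]
    linarith
  rcases lt_or_ge #Ω d with hΩd | hdΩ
  · calc (#𝒞 : ℝ) ≤ 2 ^ #Ω := by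
          exact_mod_cast (card_le_card fun C hC => mem_powerset.2 (hΩ C hC)).trans_eq
            (card_powerset Ω)
      _ ≤ (30 * #Ω / D) ^ #Ω := by gcongr
      _ ≤ (30 * #Ω / D) ^ d := pow_le_pow_right₀ (one_le_two.trans h30) hΩd.le
  by_cases hlarge : 1 ≤ d ∧ 8 * d < D
  · exact card_le_of_eight_mul_lt hΩ hd hsep hlarge.1 hlarge.2 hDΩ
  calc (#𝒞 : ℝ) ≤ ((∑ i ∈ Iic d, (#Ω).choose i : ℕ) : ℝ) := by
        exact_mod_cast (card_le_sum_choose_vcDim hΩ).trans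
          (sum_le_sum_of_subset (Iic_subset_Iic.2 hd))
    _ ≤ (Real.exp 1 * #Ω / d) ^ d := sum_choose_le_exp_mul_div_pow hdΩ
    _ ≤ (30 * #Ω / D) ^ d := by
        refine pow_le_pow_left₀ (by positivity) ?_ d
        rcases d.eq_zero_or_pos with rfl | hd1
        · rw [Nat.cast_zero, div_zero]
          positivity
        · have h8 : D ≤ 8 * d := not_lt.1 fun h => hlarge ⟨hd1, h⟩
          have he : Real.exp 1 * D ≤ 30 * d := by nlinarith [Real.exp_one_lt_d9, Real.exp_pos 1]
          rw [div_le_div_iff₀ (by positivity) hD]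
          nlinarith [(Nat.cast_nonneg #Ω : (0 : ℝ) ≤ #Ω)]

end Finset

/-! ### Translates -/

section Translates

open Finset

variable {G : Type*} [Group G] [DecidableEq G] {A B E : Finset G}

lemma Finset.exists_dominating_independent_subset {β : Type*} (B : Finset β) {r : β → β → Prop}
    (hsymm : ∀ a b, r a b → r b a) (hrefl : ∀ a, r a a) :
    ∃ E ⊆ B, (E : Set β).Pairwise (fun a b => ¬ r a b) ∧ ∀ b ∈ B, ∃ e ∈ E, r e b := by
  classical
  induction B using Finset.induction_on with
  | empty => exact ⟨∅, subset_rfl, by simp, by simp⟩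
  | insert b B _ ih =>
    obtain ⟨E, hEB, hE, hcover⟩ := ih
    by_cases hb : ∃ e ∈ E, r e b
    · refine ⟨E, hEB.trans (subset_insert b B), hE, ?_⟩
      simpa [hb] using hcover
    · push Not at hb
      refine ⟨insert b E, insert_subset_insert b hEB, ?_, ?_⟩
      · rw [coe_insert, Set.pairwise_insert]
        exact ⟨hE, fun e he _ => ⟨fun h => hb e he (hsymm b e h), hb e he⟩⟩
      · simp only [mem_insert, forall_eq_or_imp, exists_eq_or_imp]
        exact ⟨Or.inl (hrefl b), fun c hc => Or.inr (hcover c hc)⟩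

lemma mem_smul_stL_iff (A : Finset G) (e b : G) (ε : ℝ) :
    b ∈ e • stL (A : Set G) ε ↔ (#((e • A) ∆ (b • A)) : ℝ) ≤ ε * #A := by
  rw [Set.mem_smul_set_iff_inv_smul_mem, stL, stabL, Set.mem_ofPred_eq, smul_eq_mul,
    ← coe_smul_finset, ← coe_symmDiff, Set.ncard_coe_finset, Set.ncard_coe_finset,
    ← card_smul_finset e, smul_finset_symmDiff, smul_smul, mul_inv_cancel_left, symmDiff_comm]

lemma shatters_leftFam_of_shatters_image (hE : E ⊆ B) {s : Finset G}
    (hs : (E.image (· • A)).Shatters s) : Shatters (leftFam (A : Set G) B) s := by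
  classical
  intro T hT
  obtain ⟨_, hu, hsu⟩ := hs (filter_subset (· ∈ T) s)
  obtain ⟨e, he, rfl⟩ := mem_image.1 hu
  refine ⟨e • (A : Set G), ⟨e, hE he, rfl⟩, ?_⟩
  rw [← coe_smul_finset, ← coe_inter, hsu, coe_filter]
  ext x
  exact ⟨And.right, fun hx => ⟨hT hx, hx⟩⟩

lemma vcDim_image_smul_finset_le {d : ℕ} (hE : E ⊆ B)
    (hd : vcDim (leftFam (A : Set G) B) ≤ d) : (E.image (· • A)).vcDim ≤ d :=
  Finset.sup_le fun s hs => by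
    have := (le_iSup₂ (f := fun (S : Finset G) (_ : Shatters (leftFam (A : Set G) B) S) =>
      (#S : ℕ∞)) s (shatters_leftFam_of_shatters_image hE (mem_shatterer.1 hs))).trans hd
    exact_mod_cast this

theorem card_le_of_pairwise_lt_card_smul_symmDiff {d : ℕ} {ε : ℝ} (hAne : A.Nonempty)
    (hBne : B.Nonempty) (hEB : E ⊆ B) (hd : vcDim (leftFam (A : Set G) B) ≤ d)
    (hsep : (E : Set G).Pairwise fun e e' => ε * #A < #((e • A) ∆ (e' • A)))
    (hε0 : 0 < ε) (hε1 : ε < 1) :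
    (#E : ℝ) ≤ (30 * #(B * A) / (ε * #A)) ^ d := by
  have hA : (0 : ℝ) < #A := Nat.cast_pos.2 hAne.card_pos
  have hinj : Set.InjOn (· • A) (E : Set G) := by
    intro e he e' he' h
    by_contra hne
    have := hsep he he' hne
    simp only [show e • A = e' • A from h, symmDiff_self, bot_eq_empty, card_empty,
      Nat.cast_zero] at this
    linarith [mul_pos hε0 hA]
  rw [← card_image_of_injOn hinj]
  refine card_le_of_pairwise_le_card_symmDiff ?_ (vcDim_image_smul_finset_le hEB hd) ?_
    (mul_pos hε0 hA) ?_
  · simp only [mem_image]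
    rintro _ ⟨e, he, rfl⟩
    exact smul_finset_subset_mul (hEB he)
  · rw [coe_image, hinj.pairwise_image]
    exact hsep.mono' fun _ _ => le_of_lt
  · calc ε * #A < #A := mul_lt_of_lt_one_left hA hε1
      _ ≤ #(B * A) := by exact_mod_cast card_le_card_mul_left hBne

end Translates

/-- covering `B` by translates of `St^ℓ_ε(A)`
(Corollary 2.11(a) of the paper). -/
theorem cov_stL {G : Type*} [Group G] (A B : Set G)
    (hA : A.Finite) (hAne : A.Nonempty) (hB : B.Finite) (hBne : B.Nonempty)
    (d : ℕ) (hd : vcDim (leftFam A B) ≤ (d : ℕ∞))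
    (ε : ℝ) (hε0 : 0 < ε) (hε1 : ε < 1) :
    ∃ E ⊆ B, E.Finite ∧
      (E.ncard : ℝ) ≤ (30 * ((B * A).ncard : ℝ) / (ε * A.ncard)) ^ d ∧
      B ⊆ E * stL A ε := by
  classical
  obtain ⟨A, rfl⟩ := hA.exists_finset_coe
  obtain ⟨B, rfl⟩ := hB.exists_finset_coe
  obtain ⟨E, hEB, hsep, hcover⟩ := Finset.exists_dominating_independent_subset B
    (r := fun e b => (((e • A) ∆ (b • A)).card : ℝ) ≤ ε * A.card)
    (fun e b h => by rwa [symmDiff_comm])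
    (fun e => by simpa using mul_nonneg hε0.le (Nat.cast_nonneg A.card))
  refine ⟨E, Finset.coe_subset.2 hEB, E.finite_toSet, ?_, fun b hb => ?_⟩
  · rw [← Finset.coe_mul, Set.ncard_coe_finset, Set.ncard_coe_finset, Set.ncard_coe_finset]
    exact card_le_of_pairwise_lt_card_smul_symmDiff (Finset.coe_nonempty.1 hAne)
      (Finset.coe_nonempty.1 hBne) hEB hd (hsep.mono' fun _ _ => not_le.1) hε0 hε1
  · obtain ⟨e, he, hcl⟩ := hcover b hb
    exact Set.smul_set_subset_mul he ((mem_smul_stL_iff A e b ε).2 hcl)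
end

section
/- Let G be a group, A ⊆ G a finite set, N > 0 a real number, and ε ∈ (0,1). Suppose X ⊆ Stab^r_N(A) is finite and nonempty. Then |Z^ℓ_ε(A,X)| ≤ 2N/ε. In particular, if A is nonempty and X ⊆ St^r_{ε²/2}(A) is finite and nonempty, then |Z^ℓ_ε(A,X)| ≤ ε|A|. -/
open scoped Pointwise symmDiff

/-- regularity lemma, Lemma 3.3 of the paper: if `X ⊆ Stab^r_N(A)` is finite
and nonempty then `|Z^ℓ_ε(A,X)| ≤ 2N/ε`; in particular if `X ⊆ St^r_{ε²/2}(A)` then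
`|Z^ℓ_ε(A,X)| ≤ ε|A|`. -/
theorem regularity_lemma {G : Type*} [Group G] (A : Set G) (hA : A.Finite)
    (ε : ℝ) (hε0 : 0 < ε) (hε1 : ε < 1) :
    (∀ N : ℝ, 0 < N → ∀ X : Set G, X.Finite → X.Nonempty → X ⊆ stabR A N →
      ((Zl A X ε).ncard : ℝ) ≤ 2 * N / ε) ∧
    (A.Nonempty → ∀ X : Set G, X.Finite → X.Nonempty → X ⊆ stR A (ε ^ 2 / 2) →
      ((Zl A X ε).ncard : ℝ) ≤ ε * A.ncard) := by
  classical
  have main : ∀ N : ℝ, 0 < N → ∀ X : Set G, X.Finite → X.Nonempty → X ⊆ stabR A N →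
      ((Zl A X ε).ncard : ℝ) ≤ 2 * N / ε := by
    intro N hN X hX hXne hXsub
    have hXcard : (0:ℝ) < X.ncard := by
      exact_mod_cast (Set.ncard_pos hX).mpr hXne
    have hεX : 0 < ε * X.ncard := by positivity
    -- finiteness of Zl
    have hZfin : (Zl A X ε).Finite := by
      apply Set.Finite.subset ((hA.prod hX).image (fun p : G × G => p.1 * p.2⁻¹))
      intro g hg
      have h1 : (0:ℝ) < (((g • X) ∩ A).ncard : ℝ) :=
        lt_of_lt_of_le hεX (le_trans hg (min_le_left _ _))
      have h2 : ((g • X) ∩ A).Nonempty := by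
        apply Set.nonempty_of_ncard_ne_zero
        intro h; rw [h] at h1; simp at h1
      obtain ⟨y, hy1, hy2⟩ := h2
      obtain ⟨x, hx, rfl⟩ := hy1
      exact ⟨(g * x, x), ⟨by simpa using hy2, hx⟩, by simp⟩
    set Xf := hX.toFinset with hXf
    set Zf := hZfin.toFinset with hZf
    set P : G → G → Prop := fun g x => (g * x ∈ A ↔ g ∉ A) with hP
    -- count equalities
    have hcount_inter : ∀ g : G, (((g • X) ∩ A).ncard : ℝ)
        = ((Xf.filter (fun x => g * x ∈ A)).card : ℝ) := by
      intro g
      have himg : (g • X) ∩ A = (fun x => g * x) '' {x ∈ X | g * x ∈ A} := by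
        ext y
        simp only [Set.mem_inter_iff, Set.mem_smul_set, smul_eq_mul, Set.mem_image,
          Set.mem_setOf_eq]
        constructor
        · rintro ⟨⟨x, hx, rfl⟩, hy⟩; exact ⟨x, ⟨hx, hy⟩, rfl⟩
        · rintro ⟨x, ⟨hx, hy⟩, rfl⟩; exact ⟨⟨x, hx, rfl⟩, hy⟩
      rw [himg, Set.ncard_image_of_injective _ (mul_right_injective g)]
      congr 1
      rw [← Set.ncard_coe_finset]
      congr 1
      rw [Finset.coe_filter]
      ext x; simp [hXf]
    have hcount_diff : ∀ g : G, (((g • X) \ A).ncard : ℝ)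
        = ((Xf.filter (fun x => g * x ∉ A)).card : ℝ) := by
      intro g
      have himg : (g • X) \ A = (fun x => g * x) '' {x ∈ X | g * x ∉ A} := by
        ext y
        simp only [Set.mem_diff, Set.mem_smul_set, smul_eq_mul, Set.mem_image,
          Set.mem_setOf_eq]
        constructor
        · rintro ⟨⟨x, hx, rfl⟩, hy⟩; exact ⟨x, ⟨hx, hy⟩, rfl⟩
        · rintro ⟨x, ⟨hx, hy⟩, rfl⟩; exact ⟨⟨x, hx, rfl⟩, hy⟩
      rw [himg, Set.ncard_image_of_injective _ (mul_right_injective g)]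
      congr 1
      rw [← Set.ncard_coe_finset]
      congr 1
      rw [Finset.coe_filter]
      ext x; simp [hXf]
    -- lower bound per g
    have hlow : ∀ g ∈ Zf, ε * X.ncard ≤ ((Xf.filter (P g)).card : ℝ) := by
      intro g hg
      rw [hZf, Set.Finite.mem_toFinset] at hg
      by_cases hgA : g ∈ A
      · have : (Xf.filter (P g)) = Xf.filter (fun x => g * x ∉ A) := by
          apply Finset.filter_congr; intro x _; simp [hP, hgA]
        rw [this, ← hcount_diff]
        exact le_trans hg (min_le_right _ _)
      · have : (Xf.filter (P g)) = Xf.filter (fun x => g * x ∈ A) := by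
          apply Finset.filter_congr; intro x _; simp [hP, hgA]
        rw [this, ← hcount_inter]
        exact le_trans hg (min_le_left _ _)
    -- upper bound per x
    have hup : ∀ x ∈ Xf, ((Zf.filter (fun g => P g x)).card : ℝ) ≤ N := by
      intro x hx
      rw [hXf, Set.Finite.mem_toFinset] at hx
      have hAx : (A * {x⁻¹}).Finite := by
        rw [Set.mul_singleton]; exact hA.image _
      have hsd_fin : ((A * {x⁻¹}) ∆ A).Finite :=
        (hAx.union hA).subset (symmDiff_le_sup : (A * {x⁻¹}) ∆ A ≤ _)
      have hsub : ↑(Zf.filter (fun g => P g x)) ⊆ (A * {x⁻¹}) ∆ A := by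
        intro g hg
        rw [Finset.coe_filter] at hg
        obtain ⟨-, hg⟩ := hg
        have hg' : g * x ∈ A ↔ g ∉ A := hg
        have hmem : g ∈ A * {x⁻¹} ↔ g * x ∈ A := by
          rw [Set.mul_singleton]
          constructor
          · rintro ⟨a, ha, rfl⟩; simpa using ha
          · intro h; exact ⟨g * x, h, by group⟩
        rw [Set.mem_symmDiff]
        by_cases hgA : g ∈ A
        · right; exact ⟨hgA, fun h => hg'.mp (hmem.mp h) hgA⟩
        · left; exact ⟨hmem.mpr (hg'.mpr hgA), hgA⟩
      have hle : ((Zf.filter (fun g => P g x)).card : ℝ) ≤ (((A * {x⁻¹}) ∆ A).ncard : ℝ) := by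
        have := Set.ncard_le_ncard hsub hsd_fin
        rw [Set.ncard_coe_finset] at this
        exact_mod_cast this
      have heq : (((A * {x⁻¹}) ∆ A).ncard : ℝ) = (((A * {x}) ∆ A).ncard : ℝ) := by
        have hinj : Function.Injective (fun g : G => g * x) := mul_left_injective x
        have e1 : (fun g : G => g * x) '' (A * {x⁻¹}) = A := by
          rw [Set.mul_singleton, ← Set.image_comp]
          simp [Function.comp]
        have e2 : (fun g : G => g * x) '' A = A * {x} := Set.mul_singleton.symm
        have h1 : (fun g : G => g * x) '' ((A * {x⁻¹}) ∆ A) = A ∆ (A * {x}) := by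
          rw [Set.image_symmDiff hinj, e1, e2]
        have h2 := Set.ncard_image_of_injective ((A * {x⁻¹}) ∆ A) hinj
        rw [h1] at h2
        rw [← h2, symmDiff_comm]
      exact (hle.trans_eq heq).trans (hXsub hx)
    -- double counting
    have hswap : ∑ g ∈ Zf, (Xf.filter (P g)).card = ∑ x ∈ Xf, (Zf.filter (fun g => P g x)).card := by
      simp_rw [Finset.card_filter]
      rw [Finset.sum_comm]
    have h1 : (Zf.card : ℝ) * (ε * X.ncard) ≤ ∑ g ∈ Zf, ((Xf.filter (P g)).card : ℝ) := by
      calc (Zf.card : ℝ) * (ε * X.ncard) = ∑ _g ∈ Zf, (ε * X.ncard) := by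
            rw [Finset.sum_const, nsmul_eq_mul]
        _ ≤ _ := Finset.sum_le_sum hlow
    have h2 : ∑ x ∈ Xf, ((Zf.filter (fun g => P g x)).card : ℝ) ≤ (Xf.card : ℝ) * N := by
      calc ∑ x ∈ Xf, ((Zf.filter (fun g => P g x)).card : ℝ) ≤ ∑ _x ∈ Xf, N :=
            Finset.sum_le_sum hup
        _ = (Xf.card : ℝ) * N := by rw [Finset.sum_const, nsmul_eq_mul]
    have hsum_eq : ∑ g ∈ Zf, ((Xf.filter (P g)).card : ℝ)
        = ∑ x ∈ Xf, ((Zf.filter (fun g => P g x)).card : ℝ) := by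
      exact_mod_cast congrArg (Nat.cast : ℕ → ℝ) hswap
    have hXfcard : (Xf.card : ℝ) = X.ncard := by
      norm_cast
      rw [← Set.ncard_coe_finset, hXf, Set.Finite.coe_toFinset]
    have hZcard : ((Zl A X ε).ncard : ℝ) = Zf.card := by
      norm_cast
      rw [← Set.ncard_coe_finset, hZf, Set.Finite.coe_toFinset]
    have key : (Zf.card : ℝ) * (ε * X.ncard) ≤ (X.ncard : ℝ) * N := by
      calc (Zf.card : ℝ) * (ε * X.ncard) ≤ _ := h1
        _ = _ := hsum_eq
        _ ≤ (Xf.card : ℝ) * N := h2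
        _ = (X.ncard : ℝ) * N := by rw [hXfcard]
    have h3 : (Zf.card : ℝ) * ε ≤ N := by nlinarith [key, hXcard]
    rw [hZcard, le_div_iff₀ hε0]
    nlinarith [h3, hN]
  refine ⟨main, ?_⟩
  intro hAne X hX hXne hXsub
  have hApos : (0:ℝ) < A.ncard := by exact_mod_cast (Set.ncard_pos hA).mpr hAne
  have hN : (0:ℝ) < ε ^ 2 / 2 * A.ncard := by positivity
  have := main _ hN X hX hXne hXsub
  calc ((Zl A X ε).ncard : ℝ) ≤ 2 * (ε ^ 2 / 2 * A.ncard) / ε := this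
    _ = ε * A.ncard := by field_simp
end

section
/- Let G be a group, A ⊆ G a nonempty finite set, and δ ∈ (0,1). Let X = St^ℓ_{δ²/2}(A) and A' = {a ∈ A : |Xa \ A| < δ|X|}. Then |A'| ≥ (1 − 3δ)|A|. -/
open scoped Pointwise symmDiff

/-- Claim 1 in Lemma 3.4 of the paper: with `X = St^ℓ_{δ²/2}(A)` and
`A' = {a ∈ A : |Xa \ A| < δ|X|}`, one has `|A'| ≥ (1 - 3δ)|A|`. -/
theorem structure_claim1 {G : Type*} [Group G] (A : Set G)
    (hA : A.Finite) (hAne : A.Nonempty) (δ : ℝ) (hδ0 : 0 < δ) (hδ1 : δ < 1)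
    (X A' : Set G) (hX : X = stL A (δ ^ 2 / 2))
    (hA' : A' = {a ∈ A | (((X * {a}) \ A).ncard : ℝ) < δ * X.ncard}) :
    (1 - 3 * δ) * A.ncard ≤ (A'.ncard : ℝ) := by
  classical
  set ε : ℝ := δ ^ 2 / 2 with hε
  have hε0 : 0 < ε := by positivity
  have hε1 : ε < 1 := by nlinarith
  have hAcard1 : (1 : ℝ) ≤ A.ncard := by
    have := (Set.ncard_pos hA).mpr hAne
    exact_mod_cast this
  -- membership in X
  have hmemX : ∀ x : G, x ∈ X ↔ (((x • A) ∆ A).ncard : ℝ) ≤ ε * A.ncard := by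
    intro x; rw [hX]; rfl
  -- X is finite
  have hXsub : X ⊆ A * A⁻¹ := by
    intro x hx
    have h1 : (((x • A) ∆ A).ncard : ℝ) ≤ ε * A.ncard := (hmemX x).1 hx
    by_contra hxmem
    have hdisj : Disjoint (x • A) A := by
      rw [Set.disjoint_left]
      intro b hb1 hb2
      obtain ⟨a, ha, rfl⟩ := hb1
      exact hxmem ⟨x * a, hb2, a⁻¹, Set.inv_mem_inv.2 ha, by group⟩
    have hsubd : x • A ⊆ (x • A) ∆ A := by
      intro b hb
      exact Or.inl ⟨hb, Set.disjoint_left.1 hdisj hb⟩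
    have hfin : ((x • A) ∆ A).Finite := (hA.smul_set.union hA).subset symmDiff_le_sup
    have h2 : (x • A).ncard ≤ ((x • A) ∆ A).ncard := Set.ncard_le_ncard hsubd hfin
    have h3 : (x • A).ncard = A.ncard := Set.ncard_smul_set x A
    rw [h3] at h2
    have h2' : ((A.ncard : ℝ)) ≤ (((x • A) ∆ A).ncard : ℝ) := by exact_mod_cast h2
    nlinarith [h1, h2', hε1, hAcard1]
  have hXfin : X.Finite := ((hA.mul hA.inv)).subset hXsub
  have hX1 : (1 : G) ∈ X := by
    rw [hmemX]
    simp only [one_smul, symmDiff_self]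
    simp only [Set.bot_eq_empty, Set.ncard_empty, Nat.cast_zero]
    positivity
  have hXne : X.Nonempty := ⟨1, hX1⟩
  set Xf : Finset G := hXfin.toFinset with hXf
  set Af : Finset G := hA.toFinset with hAf
  have hXcard : X.ncard = Xf.card := Set.ncard_eq_toFinset_card X hXfin
  have hAcard : A.ncard = Af.card := Set.ncard_eq_toFinset_card A hA
  have hXcard1 : (1 : ℝ) ≤ Xf.card := by
    have : 0 < Xf.card := Finset.card_pos.2 (by simpa [hXf, Set.Finite.toFinset] using hXne)
    exact_mod_cast this
  -- rewrite Xa \ A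
  have key1 : ∀ a : G, ((X * {a}) \ A).ncard = (Xf.filter (fun x => x * a ∉ A)).card := by
    intro a
    have hset : (X * {a}) \ A = (fun x => x * a) '' ↑(Xf.filter (fun x => x * a ∉ A)) := by
      ext y
      simp only [Set.mem_diff, Set.mem_mul, Set.mem_singleton_iff, Set.mem_image,
        Finset.coe_filter, Set.mem_setOf_eq, Set.Finite.mem_toFinset, hXf]
      constructor
      · rintro ⟨⟨x, hx, b, rfl, rfl⟩, hy⟩
        exact ⟨x, ⟨hx, hy⟩, rfl⟩
      · rintro ⟨x, ⟨hx, hy⟩, rfl⟩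
        exact ⟨⟨x, hx, a, rfl, rfl⟩, hy⟩
    rw [hset, Set.ncard_image_of_injective _ (mul_left_injective a), Set.ncard_coe_finset]
  have key2 : ∀ x : G, ((x • A) \ A).ncard = (Af.filter (fun a => x * a ∉ A)).card := by
    intro x
    have hset : (x • A) \ A = (fun a => x * a) '' ↑(Af.filter (fun a => x * a ∉ A)) := by
      ext y
      simp only [Set.mem_diff, Set.mem_smul_set, Set.mem_image,
        Finset.coe_filter, Set.mem_setOf_eq, Set.Finite.mem_toFinset, hAf, smul_eq_mul]
      constructor
      · rintro ⟨⟨a, ha, rfl⟩, hy⟩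
        exact ⟨a, ⟨ha, hy⟩, rfl⟩
      · rintro ⟨a, ⟨ha, hy⟩, rfl⟩
        exact ⟨⟨a, ha, rfl⟩, hy⟩
    rw [hset, Set.ncard_image_of_injective _ (mul_right_injective x), Set.ncard_coe_finset]
  -- double counting
  have hsum : ∑ a ∈ Af, ((X * {a}) \ A).ncard = ∑ x ∈ Xf, ((x • A) \ A).ncard := by
    simp only [key1, key2, Finset.card_filter]
    exact Finset.sum_comm
  -- each term on the right is small
  have hterm : ∀ x ∈ Xf, (((x • A) \ A).ncard : ℝ) ≤ ε * A.ncard := by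
    intro x hx
    have hxX : x ∈ X := by rwa [hXf, Set.Finite.mem_toFinset] at hx
    have h1 : (((x • A) ∆ A).ncard : ℝ) ≤ ε * A.ncard := (hmemX x).1 hxX
    have hfin : ((x • A) ∆ A).Finite := (hA.smul_set.union hA).subset symmDiff_le_sup
    have hsub : (x • A) \ A ⊆ (x • A) ∆ A := fun b hb => Or.inl hb
    have h2 : ((x • A) \ A).ncard ≤ ((x • A) ∆ A).ncard := Set.ncard_le_ncard hsub hfin
    exact le_trans (by exact_mod_cast h2) h1
  have hsumR : (∑ x ∈ Xf, (((x • A) \ A).ncard : ℝ)) ≤ Xf.card * (ε * A.ncard) := by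
    calc (∑ x ∈ Xf, (((x • A) \ A).ncard : ℝ)) ≤ ∑ _x ∈ Xf, ε * A.ncard :=
          Finset.sum_le_sum hterm
      _ = Xf.card * (ε * A.ncard) := by rw [Finset.sum_const, nsmul_eq_mul]
  -- the bad set
  set Bf : Finset G := Af.filter (fun a => ¬ (((X * {a}) \ A).ncard : ℝ) < δ * X.ncard) with hBf
  have hbad : (Bf.card : ℝ) * (δ * X.ncard) ≤ ∑ a ∈ Af, (((X * {a}) \ A).ncard : ℝ) := by
    calc (Bf.card : ℝ) * (δ * X.ncard) = ∑ _a ∈ Bf, δ * X.ncard := by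
          rw [Finset.sum_const, nsmul_eq_mul]
      _ ≤ ∑ a ∈ Bf, (((X * {a}) \ A).ncard : ℝ) := by
          apply Finset.sum_le_sum
          intro a ha
          exact not_lt.1 (Finset.mem_filter.1 ha).2
      _ ≤ ∑ a ∈ Af, (((X * {a}) \ A).ncard : ℝ) := by
          apply Finset.sum_le_sum_of_subset_of_nonneg (Finset.filter_subset _ _)
          intro a _ _; positivity
  have hsumR' : (∑ a ∈ Af, (((X * {a}) \ A).ncard : ℝ)) ≤ Xf.card * (ε * A.ncard) := by
    have : (∑ a ∈ Af, (((X * {a}) \ A).ncard : ℝ)) = ∑ x ∈ Xf, (((x • A) \ A).ncard : ℝ) := by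
      exact_mod_cast congrArg (Nat.cast : ℕ → ℝ) hsum
    rw [this]; exact hsumR
  -- conclude Bf.card ≤ (δ/2) * Af.card
  have hBbound : (Bf.card : ℝ) ≤ δ / 2 * Af.card := by
    have h := le_trans hbad hsumR'
    rw [hXcard] at h
    have hXpos : (0 : ℝ) < Xf.card := by linarith
    have hAA : ((A.ncard : ℝ)) = Af.card := by exact_mod_cast hAcard
    rw [hε, hAA] at h
    nlinarith [mul_pos hδ0 hXpos]
  -- A' as a finset
  have hA'card : (A'.ncard : ℝ) = Af.card - Bf.card := by
    have hset : A' = ↑(Af.filter (fun a => (((X * {a}) \ A).ncard : ℝ) < δ * X.ncard)) := by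
      rw [hA']
      ext a
      simp [hAf, Set.Finite.mem_toFinset]
    rw [hset, Set.ncard_coe_finset]
    have := Finset.card_filter_add_card_filter_not
      (s := Af) (p := fun a => (((X * {a}) \ A).ncard : ℝ) < δ * X.ncard)
    rw [hBf]
    push_cast [← this]
    ring
  rw [hA'card, hAcard]
  nlinarith [hBbound, hδ0.le, (Nat.cast_nonneg Af.card : (0:ℝ) ≤ Af.card)]
end

section
/- Let G be a group, A ⊆ G a nonempty finite set, and δ ∈ (0,1/2). Let X = St^ℓ_{δ²/2}(A), let ν ∈ (0,1) satisfy ν ≤ |X|/|A|, let S = St^r_{δν}(A), and let A' = {a ∈ A : |Xa \ A| < δ|X|}. Then (1 − 2δ)|A'S| ≤ |A|. -/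
open scoped Pointwise symmDiff

open Finset

/-!
For `g = as` with `a ∈ A'` and `s ∈ S`, the part of the translate `Xg` outside `A` is covered by
`(Xa \ A)s` and `As \ A`, of total size less than `δ|X| + δν|A| ≤ 2δ|X|`; so
`|Xg ∩ A| ≥ (1 - 2δ)|X|`. On the other hand each `y ∈ A` lies in `Xg` for at most `|X|` elements
`g`, hence double counting the pairs `(g, y)` with `y ∈ Xg ∩ A` gives
`(1 - 2δ)|X| |A'S| ≤ |X| |A|`.
-/

namespace Set

variable {G : Type*} [Group G]

lemma ncard_mul_singleton (s : Set G) (g : G) : (s * {g}).ncard = s.ncard := by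
  rw [mul_singleton]
  exact ncard_image_of_injective _ (mul_left_injective g)

lemma mul_singleton_mul_diff_subset (X A : Set G) (a s : G) :
    (X * {a * s}) \ A ⊆ ((X * {a}) \ A) * {s} ∪ ((A * {s}) \ A) := by
  simp only [mul_singleton]
  rintro _ ⟨⟨x, hx, rfl⟩, hxasA⟩
  by_cases hxa : x * a ∈ A
  · exact Or.inr ⟨⟨x * a, hxa, mul_assoc x a s⟩, hxasA⟩
  · exact Or.inl ⟨x * a, ⟨⟨x, hx, rfl⟩, hxa⟩, mul_assoc x a s⟩

lemma ncard_mul_singleton_mul_diff_le {X A : Set G} (hX : X.Finite) (hA : A.Finite) (a s : G) :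
    ((X * {a * s}) \ A).ncard ≤ ((X * {a}) \ A).ncard + ((A * {s}) \ A).ncard := calc
  _ ≤ (((X * {a}) \ A) * {s} ∪ ((A * {s}) \ A)).ncard :=
    ncard_le_ncard (mul_singleton_mul_diff_subset X A a s)
      (((hX.mul (finite_singleton a)).sdiff.mul (finite_singleton s)).union
        (hA.mul (finite_singleton s)).sdiff)
  _ ≤ (((X * {a}) \ A) * {s}).ncard + ((A * {s}) \ A).ncard := ncard_union_le _ _
  _ = _ := by rw [ncard_mul_singleton]

lemma ncard_mul_singleton_diff_le_of_mem_stabR {A : Set G} (hA : A.Finite) {N : ℝ} {s : G}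
    (hs : s ∈ stabR A N) : (((A * {s}) \ A).ncard : ℝ) ≤ N := by
  have hsymm : ((A * {s}) ∆ A).Finite :=
    ((hA.mul (finite_singleton s)).union hA).subset symmDiff_le_sup
  have hsub : (A * {s}) \ A ⊆ (A * {s}) ∆ A := subset_union_left
  exact le_trans (mod_cast ncard_le_ncard hsub hsymm) hs

lemma sub_sub_le_ncard_mul_singleton_inter {X A : Set G} (hX : X.Finite) (hA : A.Finite)
    {a s : G} {ε N : ℝ} (ha : (((X * {a}) \ A).ncard : ℝ) ≤ ε) (hs : s ∈ stabR A N) :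
    X.ncard - ε - N ≤ (((X * {a * s}) ∩ A).ncard : ℝ) := by
  have hsplit : (((X * {a * s}) ∩ A).ncard : ℝ) + ((X * {a * s}) \ A).ncard = X.ncard := by
    rw [← ncard_mul_singleton X (a * s)]
    exact mod_cast ncard_inter_add_ncard_sdiff_eq_ncard _ A (hX.mul (finite_singleton _))
  have hdiff : (((X * {a * s}) \ A).ncard : ℝ) ≤ ((X * {a}) \ A).ncard + ((A * {s}) \ A).ncard :=
    mod_cast ncard_mul_singleton_mul_diff_le hX hA a s
  have hN := ncard_mul_singleton_diff_le_of_mem_stabR hA hs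
  linarith

lemma card_mul_le_of_le_ncard_mul_singleton_inter {X A : Set G} (hX : X.Finite) (hA : A.Finite)
    (T : Finset G) {m : ℝ} (hm : ∀ g ∈ T, m ≤ (((X * {g}) ∩ A).ncard : ℝ)) :
    #T * m ≤ A.ncard * X.ncard := by
  classical
  have hcount : ∀ g,
      ((X * {g}) ∩ A).ncard = #(hA.toFinset.bipartiteAbove (fun g y ↦ y * g⁻¹ ∈ X) g) := by
    intro g
    rw [← ncard_coe_finset]
    congr 1
    ext y
    simp [bipartiteAbove, mul_singleton, and_comm]
  have hbelow : ∀ y ∈ hA.toFinset,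
      #(T.bipartiteBelow (fun g y ↦ y * g⁻¹ ∈ X) y) ≤ (X.ncard : ℝ) := by
    intro y _
    rw [ncard_eq_toFinset_card X hX]
    exact_mod_cast card_le_card_of_injOn (fun g ↦ y * g⁻¹)
      (fun g hg ↦ by simpa using (mem_bipartiteBelow _).mp hg |>.2)
      (fun g₁ _ g₂ _ h ↦ inv_injective (mul_left_cancel h))
  have hpairs :=
    card_nsmul_le_card_nsmul (fun g y ↦ y * g⁻¹ ∈ X) (fun g hg ↦ hcount g ▸ hm g hg) hbelow
  simpa [nsmul_eq_mul, ncard_eq_toFinset_card A hA] using hpairs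

end Set

theorem structure_claim2_general {G : Type*} [Group G] (A : Set G)
    (δ : ℝ) (hδ0 : 0 < δ)
    (ν : ℝ) (hν0 : 0 < ν)
    (X S A' : Set G)
    (hν : ν ≤ (X.ncard : ℝ) / A.ncard)
    (hS : S = stR A (δ * ν))
    (hA' : A' = {a ∈ A | (((X * {a}) \ A).ncard : ℝ) < δ * X.ncard}) :
    (1 - 2 * δ) * ((A' * S).ncard : ℝ) ≤ (A.ncard : ℝ) := by
  -- `ν > 0` rules out the junk values `|X| / 0 = 0` and `ncard = 0` of infinite sets.
  obtain ⟨hX0, hA0⟩ : (0 : ℝ) < X.ncard ∧ (0 : ℝ) < A.ncard :=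
    (div_pos_iff.mp (hν0.trans_le hν)).resolve_right fun h ↦ h.1.not_ge (Nat.cast_nonneg _)
  have hXfin := Set.finite_of_ncard_pos (Nat.cast_pos.mp hX0)
  have hAfin := Set.finite_of_ncard_pos (Nat.cast_pos.mp hA0)
  by_cases hT : (A' * S).Finite
  swap
  · rw [Set.Infinite.ncard hT, Nat.cast_zero, mul_zero]
    exact hA0.le
  have hlarge : ∀ g ∈ hT.toFinset, (1 - 2 * δ) * X.ncard ≤ (((X * {g}) ∩ A).ncard : ℝ) := by
    intro g hg
    obtain ⟨a, ha, s, hs, rfl⟩ := hT.mem_toFinset.mp hg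
    rw [hA'] at ha
    rw [hS] at hs
    have hδν : δ * ν * A.ncard ≤ δ * X.ncard := by
      rw [mul_assoc]
      exact mul_le_mul_of_nonneg_left ((le_div_iff₀ hA0).mp hν) hδ0.le
    have hinter := Set.sub_sub_le_ncard_mul_singleton_inter hXfin hAfin ha.2.le hs
    linarith
  have hcount := Set.card_mul_le_of_le_ncard_mul_singleton_inter hXfin hAfin hT.toFinset hlarge
  rw [Set.ncard_eq_toFinset_card _ hT]
  refine le_of_mul_le_mul_right ?_ hX0
  linarith

/-- Claim 2 in Lemma 3.4 of the paper: with `X = St^ℓ_{δ²/2}(A)`,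
`ν ≤ |X|/|A|`, `S = St^r_{δν}(A)` and `A' = {a ∈ A : |Xa \ A| < δ|X|}`, one has
`(1 - 2δ)|A'S| ≤ |A|`. -/
theorem structure_claim2 {G : Type*} [Group G] (A : Set G)
    (hA : A.Finite) (hAne : A.Nonempty)
    (δ : ℝ) (hδ0 : 0 < δ) (hδ1 : δ < 1 / 2)
    (ν : ℝ) (hν0 : 0 < ν) (hν1 : ν < 1)
    (X S A' : Set G) (hX : X = stL A (δ ^ 2 / 2))
    (hν : ν ≤ (X.ncard : ℝ) / A.ncard)
    (hS : S = stR A (δ * ν))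
    (hA' : A' = {a ∈ A | (((X * {a}) \ A).ncard : ℝ) < δ * X.ncard}) :
    (1 - 2 * δ) * ((A' * S).ncard : ℝ) ≤ (A.ncard : ℝ) :=
  structure_claim2_general A δ hδ0 ν hν0 X S A' hν hS hA'
end

section
/- Let G be a group and A ⊆ G a nonempty finite set. Suppose H is a finite subgroup of G such that H ⊆ Stab^r_N(A) for some real N > 0. Then there is a set D ⊆ G which is a union of left cosets of H such that |A △ D| ≤ N. -/
open scoped Pointwise symmDiff

section AFZAux

open Finset

variable {G : Type*} [Group G] [DecidableEq G]

variable {G : Type*} [Group G] [DecidableEq G]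

/-- count of h ∈ Hf with x*h ∈ Af -/
private def acnt (Af Hf : Finset G) (x : G) : ℕ :=
  (Hf.filter (fun h => x * h ∈ Af)).card

private lemma acnt_mul (Af : Finset G) (H : Subgroup G) (hHfin : (H : Set G).Finite)
    {x k : G} (hk : k ∈ H) : acnt Af hHfin.toFinset (x * k) = acnt Af hHfin.toFinset x := by
  unfold acnt
  apply Finset.card_bij (fun h _ => k * h)
  · intro h hh
    simp only [mem_filter, Set.Finite.mem_toFinset, SetLike.mem_coe] at hh ⊢
    refine ⟨H.mul_mem hk hh.1, ?_⟩
    rw [← mul_assoc]; exact hh.2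
  · intro a ha b hb hab
    exact mul_left_cancel hab
  · intro b hb
    simp only [mem_filter, Set.Finite.mem_toFinset, SetLike.mem_coe] at hb
    refine ⟨k⁻¹ * b, ?_, by group⟩
    simp only [mem_filter, Set.Finite.mem_toFinset, SetLike.mem_coe]
    refine ⟨H.mul_mem (H.inv_mem hk) hb.1, ?_⟩
    have he : x * k * (k⁻¹ * b) = x * b := by group
    rw [he]; exact hb.2

private lemma acnt_inv (Af : Finset G) (H : Subgroup G) (hHfin : (H : Set G).Finite)
    (x : G) : (hHfin.toFinset.filter (fun h => x * h⁻¹ ∈ Af)).card = acnt Af hHfin.toFinset x := by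
  unfold acnt
  apply Finset.card_bij (fun h _ => h⁻¹)
  · intro h hh
    simp only [mem_filter, Set.Finite.mem_toFinset, SetLike.mem_coe] at hh ⊢
    exact ⟨H.inv_mem hh.1, by simpa using hh.2⟩
  · intro a _ b _ hab; simpa using hab
  · intro b hb
    simp only [mem_filter, Set.Finite.mem_toFinset, SetLike.mem_coe] at hb ⊢
    exact ⟨b⁻¹, ⟨H.inv_mem hb.1, by simpa using hb.2⟩, by simp⟩

private lemma acnt_le (Af Hf : Finset G) (x : G) : acnt Af Hf x ≤ Hf.card :=
  Finset.card_filter_le _ _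

private lemma key_lemma (Af : Finset G) (H : Subgroup G) (hHfin : (H : Set G).Finite) :
    ∃ Fs : Finset G, (Fs : Set G) * (H : Set G) = (Fs : Set G) ∧
      hHfin.toFinset.card * (Af ∆ Fs).card ≤
        ∑ h ∈ hHfin.toFinset, ((Af * {h}) ∆ Af).card := by
  classical
  set Hf := hHfin.toFinset with hHf
  set m := Hf.card with hm
  set a : G → ℕ := acnt Af Hf with ha
  set S : Finset G := Af * Hf with hS
  have h1H : (1 : G) ∈ Hf := by
    simp only [hHf, Set.Finite.mem_toFinset, SetLike.mem_coe]; exact H.one_mem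
  -- S is union of cosets
  have hSmul : ∀ x ∈ S, ∀ k ∈ H, x * k ∈ S := by
    intro x hx k hk
    rw [hS, Finset.mem_mul] at hx ⊢
    obtain ⟨u, hu, v, hv, rfl⟩ := hx
    refine ⟨u, hu, v * k, ?_, (mul_assoc u v k).symm⟩
    simp only [hHf, Set.Finite.mem_toFinset, SetLike.mem_coe] at hv ⊢
    exact H.mul_mem hv hk
  have hAS : Af ⊆ S := fun x hx => by
    rw [hS, Finset.mem_mul]; exact ⟨x, hx, 1, h1H, mul_one x⟩
  set Fs : Finset G := S.filter (fun x => m < 2 * a x) with hFs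
  have hFsS : Fs ⊆ S := Finset.filter_subset _ _
  have hmemFs : ∀ x ∈ S, (x ∈ Fs ↔ m < 2 * a x) := by
    intro x hx
    simp [hFs, Finset.mem_filter, hx]
  refine ⟨Fs, ?_, ?_⟩
  · apply Set.Subset.antisymm
    · rintro z ⟨x, hx, k, hk, rfl⟩
      have hxF : x ∈ Fs := Finset.mem_coe.mp hx
      have hkH : k ∈ H := hk
      have hxS : x ∈ S := hFsS hxF
      have h2 : m < 2 * a x := (hmemFs x hxS).mp hxF
      have hxkS : x * k ∈ S := hSmul x hxS k hkH
      refine Finset.mem_coe.mpr ((hmemFs _ hxkS).mpr ?_)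
      show m < 2 * acnt Af hHfin.toFinset (x * k)
      rw [acnt_mul Af H hHfin hkH]
      exact h2
    · intro z hz
      exact ⟨z, hz, 1, H.one_mem, mul_one z⟩
  · -- the counting inequality
    set w : G → ℕ := fun x => if x ∈ Af then m - a x else a x with hw
    have hmul_mem : ∀ (h x : G), x ∈ Af * ({h} : Finset G) ↔ x * h⁻¹ ∈ Af := by
      intro h x
      rw [Finset.mem_mul]
      constructor
      · rintro ⟨y, hy, z, hz, rfl⟩
        simp only [Finset.mem_singleton] at hz
        subst hz; simpa using hy
      · intro hx
        exact ⟨x * h⁻¹, hx, h, Finset.mem_singleton_self h, by group⟩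
    -- Step A+B : the sum over H equals the weighted sum over S
    have hstep1 : ∑ h ∈ Hf, ((Af * {h}) ∆ Af).card = ∑ x ∈ S, w x := by
      have hsub : ∀ h ∈ Hf, (Af * {h}) ∆ Af ⊆ S := by
        intro h hh x hx
        rw [Finset.mem_symmDiff] at hx
        rcases hx with ⟨hx1, _⟩ | ⟨hx1, _⟩
        · rw [hmul_mem] at hx1
          have := hAS hx1
          have h2 := hSmul _ this h (by simpa [hHf, Set.Finite.mem_toFinset] using hh)
          simpa using h2
        · exact hAS hx1
      have hcard : ∀ h ∈ Hf, ((Af * {h}) ∆ Af).card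
          = ∑ x ∈ S, (if x ∈ (Af * {h}) ∆ Af then 1 else 0) := by
        intro h hh
        rw [← Finset.card_filter]
        congr 1
        rw [Finset.filter_mem_eq_inter]
        exact (Finset.inter_eq_right.mpr (hsub h hh)).symm
      rw [Finset.sum_congr rfl hcard, Finset.sum_comm]
      apply Finset.sum_congr rfl
      intro x hx
      rw [← Finset.card_filter]
      have hfc : ∀ h, x ∈ (Af * {h}) ∆ Af ↔ ((x * h⁻¹ ∈ Af ∧ x ∉ Af) ∨ (x ∈ Af ∧ x * h⁻¹ ∉ Af)) := by
        intro h
        rw [Finset.mem_symmDiff, hmul_mem]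
      by_cases hxA : x ∈ Af
      · have : Hf.filter (fun h => x ∈ (Af * {h}) ∆ Af)
            = Hf.filter (fun h => ¬ (x * h⁻¹ ∈ Af)) := by
          apply Finset.filter_congr
          intro h _
          simp [hfc h, hxA]
        rw [this, hw]
        simp only [hxA, if_true]
        have := Finset.card_filter_add_card_filter_not
          (s := Hf) (p := fun h => x * h⁻¹ ∈ Af)
        have h2 : (Hf.filter (fun h => x * h⁻¹ ∈ Af)).card = a x := by
          rw [ha]; exact acnt_inv Af H hHfin x
        omega
      · have : Hf.filter (fun h => x ∈ (Af * {h}) ∆ Af)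
            = Hf.filter (fun h => x * h⁻¹ ∈ Af) := by
          apply Finset.filter_congr
          intro h _
          simp [hfc h, hxA]
        rw [this, hw]
        simp only [hxA, if_false]
        rw [ha]; exact acnt_inv Af H hHfin x
    rw [hstep1]
    -- Step C : fiberwise comparison over cosets
    have hAFS : Af ∆ Fs ⊆ S := by
      intro x hx
      rw [Finset.mem_symmDiff] at hx
      rcases hx with ⟨hx1, _⟩ | ⟨hx1, _⟩
      · exact hAS hx1
      · exact hFsS hx1
    have hcardAFS : (Af ∆ Fs).card = ∑ x ∈ S, (if x ∈ Af ∆ Fs then 1 else 0) := by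
      rw [← Finset.card_filter]
      congr 1
      rw [Finset.filter_mem_eq_inter]
      exact (Finset.inter_eq_right.mpr hAFS).symm
    rw [hcardAFS]
    set π : G → G ⧸ H := QuotientGroup.mk with hπ
    have hmaps : ∀ x ∈ S, π x ∈ S.image π := fun x hx => Finset.mem_image_of_mem π hx
    rw [← Finset.sum_fiberwise_of_maps_to hmaps (fun x => if x ∈ Af ∆ Fs then 1 else 0),
        ← Finset.sum_fiberwise_of_maps_to hmaps w, Finset.mul_sum]
    apply Finset.sum_le_sum
    intro q hq
    obtain ⟨x₀, hx₀S, hx₀q⟩ := Finset.mem_image.mp hq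
    set C : Finset G := S.filter (fun x => π x = q) with hC
    have hCim : C = Hf.image (fun h => x₀ * h) := by
      ext y
      simp only [hC, Finset.mem_filter, Finset.mem_image, hHf, Set.Finite.mem_toFinset,
        SetLike.mem_coe]
      constructor
      · rintro ⟨hyS, hyq⟩
        refine ⟨x₀⁻¹ * y, ?_, by group⟩
        rw [← QuotientGroup.eq (s := H)]
        rw [hπ] at hx₀q hyq
        exact hx₀q.trans hyq.symm
      · rintro ⟨h, hh, rfl⟩
        refine ⟨hSmul x₀ hx₀S h hh, ?_⟩
        rw [← hx₀q, hπ]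
        symm
        rw [QuotientGroup.eq (s := H)]
        convert hh using 1
        group
    have hCcard : C.card = m := by
      rw [hCim, Finset.card_image_of_injective _ (mul_right_injective x₀), hm]
    set a₀ := a x₀ with ha₀
    have ha₀m : a₀ ≤ m := by rw [ha₀, ha, hm]; exact acnt_le Af Hf x₀
    have haC : ∀ y ∈ C, a y = a₀ := by
      intro y hy
      rw [hCim, Finset.mem_image] at hy
      obtain ⟨h, hh, rfl⟩ := hy
      rw [ha, ha₀, ha]
      exact acnt_mul Af H hHfin (by simpa [hHf, Set.Finite.mem_toFinset] using hh)
    have hCA : (C.filter (fun y => y ∈ Af)).card = a₀ := by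
      rw [hCim]
      rw [Finset.filter_image]
      rw [Finset.card_image_of_injective _ (mul_right_injective x₀)]
      rw [ha₀, ha]; rfl
    have hCnA : (C.filter (fun y => y ∉ Af)).card = m - a₀ := by
      have := Finset.card_filter_add_card_filter_not
        (s := C) (p := fun y => y ∈ Af)
      omega
    have hwsum : ∑ y ∈ C, w y = a₀ * (m - a₀) + (m - a₀) * a₀ := by
      have : ∑ y ∈ C, w y = ∑ y ∈ C, (if y ∈ Af then m - a₀ else a₀) := by
        apply Finset.sum_congr rfl
        intro y hy
        rw [hw]
        simp only [haC y hy]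
      rw [this, Finset.sum_ite, Finset.sum_const, Finset.sum_const, hCA, hCnA,
        smul_eq_mul, smul_eq_mul]
    rw [hwsum]
    have hCsub : C ⊆ S := Finset.filter_subset _ _
    by_cases hlt : m < 2 * a₀
    · have hind : ∑ y ∈ C, (if y ∈ Af ∆ Fs then 1 else 0) = m - a₀ := by
        rw [← Finset.card_filter]
        rw [← hCnA]
        congr 1
        apply Finset.filter_congr
        intro y hy
        have hyFs : y ∈ Fs := by
          rw [hmemFs y (hCsub hy)]
          rw [haC y hy]; exact hlt
        simp [Finset.mem_symmDiff, hyFs]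
      rw [hind]
      calc m * (m - a₀) ≤ (2 * a₀) * (m - a₀) :=
            Nat.mul_le_mul_right _ (le_of_lt hlt)
        _ = a₀ * (m - a₀) + (m - a₀) * a₀ := by ring
    · have hind : ∑ y ∈ C, (if y ∈ Af ∆ Fs then 1 else 0) = a₀ := by
        rw [← Finset.card_filter]
        rw [← hCA]
        congr 1
        apply Finset.filter_congr
        intro y hy
        have hyFs : y ∉ Fs := by
          rw [hmemFs y (hCsub hy), haC y hy]; exact hlt
        simp [Finset.mem_symmDiff, hyFs]
      rw [hind]
      have h2 : m ≤ 2 * (m - a₀) := by omega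
      calc m * a₀ ≤ (2 * (m - a₀)) * a₀ := Nat.mul_le_mul_right _ h2
        _ = a₀ * (m - a₀) + (m - a₀) * a₀ := by ring

end AFZAux

/-- Lemma 6.2 of the paper, the Alon–Fox–Zhao stabilizer lemma: if a finite
subgroup `H` is contained in `Stab^r_N(A)`, then some union `D = FH` of left cosets of `H`
satisfies `|A △ D| ≤ N`. -/
theorem afz_stabilizer_lemma {G : Type*} [Group G] (A : Set G)
    (hA : A.Finite) (hAne : A.Nonempty)
    (H : Subgroup G) (hHfin : (H : Set G).Finite)
    (N : ℝ) (hN : 0 < N) (hHs : (H : Set G) ⊆ stabR A N) :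
    ∃ F : Set G, ((A ∆ (F * (H : Set G))).ncard : ℝ) ≤ N := by
  classical
  obtain ⟨Fs, hFsH, hkey⟩ := key_lemma hA.toFinset H hHfin
  refine ⟨(Fs : Set G), ?_⟩
  rw [hFsH]
  have hcoe : A ∆ (Fs : Set G) = ((hA.toFinset ∆ Fs : Finset G) : Set G) := by
    rw [Finset.coe_symmDiff, hA.coe_toFinset]
  rw [hcoe, Set.ncard_coe_finset]
  set m := hHfin.toFinset.card with hm
  have hmpos : 0 < m := Finset.card_pos.mpr
    ⟨1, by simp only [Set.Finite.mem_toFinset, SetLike.mem_coe]; exact H.one_mem⟩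
  have hterm : ∀ h ∈ hHfin.toFinset, (((hA.toFinset * {h}) ∆ hA.toFinset).card : ℝ) ≤ N := by
    intro h hh
    have hhH : h ∈ (H : Set G) := by
      simpa only [Set.Finite.mem_toFinset] using hh
    have h2 := hHs hhH
    rw [stabR, Set.mem_setOf_eq] at h2
    have heq : (A * {h}) ∆ A = ((((hA.toFinset * {h}) ∆ hA.toFinset) : Finset G) : Set G) := by
      rw [Finset.coe_symmDiff, Finset.coe_mul, Finset.coe_singleton, hA.coe_toFinset]
    rw [heq, Set.ncard_coe_finset] at h2
    exact h2
  have hsum : ((∑ h ∈ hHfin.toFinset, ((hA.toFinset * {h}) ∆ hA.toFinset).card : ℕ) : ℝ)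
      ≤ m * N := by
    push_cast
    calc (∑ h ∈ hHfin.toFinset, (((hA.toFinset * {h}) ∆ hA.toFinset).card : ℝ))
        ≤ ∑ _h ∈ hHfin.toFinset, N := Finset.sum_le_sum hterm
      _ = m * N := by rw [Finset.sum_const, nsmul_eq_mul]
  have hcast : (m : ℝ) * ((hA.toFinset ∆ Fs).card : ℝ) ≤ (m : ℝ) * N := by
    calc (m : ℝ) * ((hA.toFinset ∆ Fs).card : ℝ)
        = ((m * (hA.toFinset ∆ Fs).card : ℕ) : ℝ) := by push_cast; ring
      _ ≤ ((∑ h ∈ hHfin.toFinset, ((hA.toFinset * {h}) ∆ hA.toFinset).card : ℕ) : ℝ) :=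
          Nat.cast_le.mpr hkey
      _ ≤ m * N := hsum
  exact le_of_mul_le_mul_left hcast (by exact_mod_cast hmpos)
end

section
/- Let G be a group, A ⊆ G a nonempty finite set, and H a finite subgroup of G with H ⊆ Stab^r_N(A) for some real N > 0. Then for every ε ∈ (0,1), |Z^ℓ_ε(A,H)| ≤ N/(2ε²). -/
/-!
Double counting. For `x ∈ H` put `D_x = Ax △ A`. A point `b` of a left coset `gH` lies in `D_x`
exactly when `b` and `bx⁻¹` lie on different sides of `A`, and as `x` runs over `H`, `bx⁻¹` runs
over `gH`. Hence `∑_{x ∈ H} |gH ∩ D_x| = 2 |gH ∩ A| |gH \ A|`, which is at least `2ε²|H|²` for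
`g ∈ Z^ℓ_ε(A,H)`. On the other hand a point lies in `gH` for at most `|H|` values of `g`, so
`∑_{g ∈ Z} |gH ∩ D_x| ≤ |H| |D_x| ≤ N |H|`. Summing over `x ∈ H` gives `|Z| · 2ε²|H|² ≤ N |H|²`.
-/

open scoped Pointwise symmDiff

open Finset

section Counting

variable {α : Type*}

lemma sum_card_filter_mem_iff_notMem (C : Finset α) (A : Set α) [DecidablePred (· ∈ A)] :
    ∑ b ∈ C, #{c ∈ C | c ∈ A ↔ b ∉ A} = 2 * #{c ∈ C | c ∈ A} * #{c ∈ C | c ∉ A} := by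
  have in_A : ∀ b ∈ {b ∈ C | b ∈ A}, #{c ∈ C | c ∈ A ↔ b ∉ A} = #{c ∈ C | c ∉ A} :=
    fun b hb => by simp [(mem_filter.1 hb).2]
  have notin_A : ∀ b ∈ {b ∈ C | b ∉ A}, #{c ∈ C | c ∈ A ↔ b ∉ A} = #{c ∈ C | c ∈ A} :=
    fun b hb => by simp [(mem_filter.1 hb).2]
  rw [← sum_filter_add_sum_filter_not C (· ∈ A), sum_congr rfl in_A, sum_congr rfl notin_A,
    sum_const, sum_const, smul_eq_mul, smul_eq_mul]
  ring

lemma ncard_coe_inter_eq_card_filter (C : Finset α) (A : Set α) [DecidablePred (· ∈ A)] :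
    ((C : Set α) ∩ A).ncard = #{c ∈ C | c ∈ A} := by
  rw [← Set.ncard_coe_finset, coe_filter]
  rfl

lemma ncard_coe_diff_eq_card_filter (C : Finset α) (A : Set α) [DecidablePred (· ∈ A)] :
    ((C : Set α) \ A).ncard = #{c ∈ C | c ∉ A} := by
  rw [← Set.ncard_coe_finset, coe_filter]
  rfl

end Counting

section Group

variable {G : Type*} [Group G]

lemma mem_mul_singleton_symmDiff_iff {A : Set G} {b x : G} :
    b ∈ (A * {x}) ∆ A ↔ (b * x⁻¹ ∈ A ↔ b ∉ A) := by
  rw [Set.mem_symmDiff, Set.mul_singleton, Set.image_mul_right]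
  tauto

lemma sum_card_filter_smul_mem_le [DecidableEq G] (Z K : Finset G) {D : Set G} (hD : D.Finite)
    [DecidablePred (· ∈ D)] :
    ∑ g ∈ Z, #{b ∈ g • K | b ∈ D} ≤ D.ncard * #K := by
  calc ∑ g ∈ Z, #{b ∈ g • K | b ∈ D} = ∑ g ∈ Z, #{b ∈ hD.toFinset | b ∈ g • K} :=
        sum_congr rfl fun g _ => congrArg card (by ext; simp [and_comm])
    _ = ∑ b ∈ hD.toFinset, #{g ∈ Z | b ∈ g • K} :=
        sum_card_bipartiteAbove_eq_sum_card_bipartiteBelow _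
    _ ≤ ∑ _b ∈ hD.toFinset, #K := sum_le_sum fun b _ => by
        refine card_le_card_of_injOn (fun g => g⁻¹ * b) (fun g hg => ?_) fun g _ g' _ h => ?_
        · exact inv_smul_mem_iff.2 (mem_filter.1 hg).2
        · simpa using h
    _ = D.ncard * #K := by rw [sum_const, smul_eq_mul, Set.ncard_eq_toFinset_card _ hD]

lemma sum_card_filter_smul_le_of_mem_stabR [DecidableEq G] {A : Set G} (hA : A.Finite)
    [DecidablePred (· ∈ A)] {N : ℝ} {x : G} (hx : x ∈ stabR A N) (Z K : Finset G) :
    (∑ g ∈ Z, #{b ∈ g • K | b * x⁻¹ ∈ A ↔ b ∉ A} : ℝ) ≤ N * #K := by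
  classical
  have h_count : ∑ g ∈ Z, #{b ∈ g • K | b * x⁻¹ ∈ A ↔ b ∉ A} ≤ ((A * {x}) ∆ A).ncard * #K := by
    simp_rw [← mem_mul_singleton_symmDiff_iff]
    exact sum_card_filter_smul_mem_le Z K ((hA.mul (Set.finite_singleton x)).symmDiff hA)
  calc (∑ g ∈ Z, #{b ∈ g • K | b * x⁻¹ ∈ A ↔ b ∉ A} : ℝ)
      ≤ ((A * {x}) ∆ A).ncard * #K := by exact_mod_cast h_count
    _ ≤ N * #K := mul_le_mul_of_nonneg_right hx (Nat.cast_nonneg _)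

lemma Zl_subset_mul_inv {A X : Set G} {ε : ℝ} (hε : 0 < ε) (hX : X.Finite) (hXne : X.Nonempty) :
    Zl A X ε ⊆ A * X⁻¹ := by
  intro g hg
  have hX_pos : (0 : ℝ) < ε * X.ncard :=
    mul_pos hε (by exact_mod_cast (Set.ncard_pos hX).2 hXne)
  have h_inter : ((g • X) ∩ A).ncard ≠ 0 :=
    (Nat.cast_pos.1 (hX_pos.trans_le (hg.trans (min_le_left _ _)))).ne'
  obtain ⟨_, ⟨y, hy, rfl⟩, hgy⟩ := Set.nonempty_of_ncard_ne_zero h_inter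
  exact ⟨g • y, hgy, y⁻¹, Set.inv_mem_inv.2 hy, by simp [smul_eq_mul]⟩

variable {H : Subgroup G} (hH : (H : Set G).Finite)

lemma card_filter_mul_inv_eq_card_filter_smul [DecidableEq G] {g b : G}
    (hb : b ∈ g • hH.toFinset) (p : G → Prop) [DecidablePred p] :
    #{x ∈ hH.toFinset | p (b * x⁻¹)} = #{c ∈ g • hH.toFinset | p c} := by
  have h_coset : g • hH.toFinset = b • hH.toFinset := by
    apply coe_injective
    simpa [leftCoset_eq_iff] using inv_smul_mem_iff.2 hb
  rw [h_coset]
  apply card_nbij' (fun x => b * x⁻¹) (fun c => c⁻¹ * b)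
  · intro x hx
    simpa [← inv_smul_mem_iff, smul_eq_mul] using hx
  · intro c hc
    simp only [coe_filter, Set.mem_ofPred_eq, ← inv_smul_mem_iff, smul_eq_mul,
      Set.Finite.mem_toFinset, SetLike.mem_coe] at hc
    simpa using And.intro (H.inv_mem hc.1) hc.2
  · intro x _
    simp
  · intro c _
    simp

lemma sum_card_filter_smul_mul_inv_mem_iff_notMem [DecidableEq G] (A : Set G)
    [DecidablePred (· ∈ A)] (g : G) :
    ∑ x ∈ hH.toFinset, #{b ∈ g • hH.toFinset | b * x⁻¹ ∈ A ↔ b ∉ A}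
      = 2 * #{b ∈ g • hH.toFinset | b ∈ A} * #{b ∈ g • hH.toFinset | b ∉ A} := by
  calc ∑ x ∈ hH.toFinset, #{b ∈ g • hH.toFinset | b * x⁻¹ ∈ A ↔ b ∉ A}
      = ∑ b ∈ g • hH.toFinset, #{x ∈ hH.toFinset | b * x⁻¹ ∈ A ↔ b ∉ A} :=
        sum_card_bipartiteAbove_eq_sum_card_bipartiteBelow _
    _ = ∑ b ∈ g • hH.toFinset, #{c ∈ g • hH.toFinset | c ∈ A ↔ b ∉ A} :=
        sum_congr rfl fun b hb =>
          card_filter_mul_inv_eq_card_filter_smul hH hb (fun c => c ∈ A ↔ b ∉ A)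
    _ = _ := sum_card_filter_mem_iff_notMem _ A

lemma two_mul_sq_le_sum_card_of_mem_Zl [DecidableEq G] {A : Set G} [DecidablePred (· ∈ A)]
    {ε : ℝ} (hε : 0 ≤ ε) {g : G} (hg : g ∈ Zl A H ε) :
    2 * ε ^ 2 * #hH.toFinset ^ 2
      ≤ (∑ x ∈ hH.toFinset, #{b ∈ g • hH.toFinset | b * x⁻¹ ∈ A ↔ b ∉ A} : ℝ) := by
  have h_coset : g • (H : Set G) = ↑(g • hH.toFinset) := by simp
  rw [Zl, Set.mem_ofPred_eq, le_min_iff, h_coset, ncard_coe_inter_eq_card_filter,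
    ncard_coe_diff_eq_card_filter, Set.ncard_eq_toFinset_card _ hH] at hg
  rw [← Nat.cast_sum, sum_card_filter_smul_mul_inv_mem_iff_notMem hH]
  push_cast
  have hεK : 0 ≤ ε * #hH.toFinset := by positivity
  nlinarith [mul_le_mul hg.1 hg.2 hεK (by positivity)]

end Group

theorem afz_regularity_general {G : Type*} [Group G] (A : Set G)
    (hA : A.Finite)
    (H : Subgroup G) (hHfin : (H : Set G).Finite)
    (N : ℝ) (hHs : (H : Set G) ⊆ stabR A N) :
    ∀ ε : ℝ, 0 < ε → ε < 1 →
      ((Zl A (H : Set G) ε).ncard : ℝ) ≤ N / (2 * ε ^ 2) := by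
  classical
  intro ε hε _
  set K := hHfin.toFinset
  have hZ : (Zl A H ε).Finite :=
    (hA.mul hHfin.inv).subset (Zl_subset_mul_inv hε hHfin ⟨1, H.one_mem⟩)
  set Z := hZ.toFinset
  have hK : (0 : ℝ) < #K := by exact_mod_cast card_pos.2 ⟨1, by simp [K]⟩
  have h_double : #Z * (2 * ε ^ 2) * #K ^ 2 ≤ N * #K ^ 2 :=
    calc #Z * (2 * ε ^ 2) * #K ^ 2 = ∑ _g ∈ Z, 2 * ε ^ 2 * #K ^ 2 := by
          rw [sum_const, nsmul_eq_mul]; ring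
      _ ≤ ∑ g ∈ Z, ∑ x ∈ K, (#{b ∈ g • K | b * x⁻¹ ∈ A ↔ b ∉ A} : ℝ) :=
          sum_le_sum fun g hg =>
            two_mul_sq_le_sum_card_of_mem_Zl hHfin hε.le (hZ.mem_toFinset.1 hg)
      _ = ∑ x ∈ K, ∑ g ∈ Z, (#{b ∈ g • K | b * x⁻¹ ∈ A ↔ b ∉ A} : ℝ) := sum_comm
      _ ≤ ∑ _x ∈ K, N * #K :=
          sum_le_sum fun x hx =>
            sum_card_filter_smul_le_of_mem_stabR hA (hHs (hHfin.mem_toFinset.1 hx)) Z K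
      _ = N * #K ^ 2 := by rw [sum_const, nsmul_eq_mul]; ring
  rw [Set.ncard_eq_toFinset_card _ hZ, le_div_iff₀ (by positivity)]
  exact le_of_mul_le_mul_right h_double (by positivity)

/-- Remark 6.3 of the paper: if a finite subgroup `H` is contained in
`Stab^r_N(A)`, then `|Z^ℓ_ε(A,H)| ≤ N/(2ε²)` for every `ε ∈ (0,1)`. -/
theorem afz_regularity {G : Type*} [Group G] (A : Set G)
    (hA : A.Finite) (hAne : A.Nonempty)
    (H : Subgroup G) (hHfin : (H : Set G).Finite)
    (N : ℝ) (hN : 0 < N) (hHs : (H : Set G) ⊆ stabR A N) :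
    ∀ ε : ℝ, 0 < ε → ε < 1 →
      ((Zl A (H : Set G) ε).ncard : ℝ) ≤ N / (2 * ε ^ 2) :=
  afz_regularity_general A hA H hHfin N hHs
end
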